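/- arXiv:0705.3305 — 5 statements merged into one kernel-verified Lean document; each statement's English description precedes it below -/
import Mathlib

section
/- Assume E(T^2) < ∞. Then for every n ≥ 1, E(|W^p_n|^2) = n·E(T^2) − E(T)^2·( n/d + ((2d−1)/(2d^2))·[ (−1/(2d−1))^n − 1 ] ). -/
open MeasureTheory ProbabilityTheory Filter

noncomputable section

/-- The `2d` unit vectors `±e_i` of `ℤ^d ⊆ ℝ^d`. -/
def unitVecs (d : ℕ) : Set (EuclideanSpace ℝ (Fin d)) :=
  {v | ∃ i : Fin d, v = EuclideanSpace.single i 1 ∨ v = EuclideanSpace.single i (-1)}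

/-- The random times `τ_n = T_1 + ⋯ + T_n` (with `τ_0 = 0`). -/
def tauT {Ω : Type} (T : ℕ → Ω → ℕ) (n : ℕ) (ω : Ω) : ℕ :=
  ∑ k ∈ Finset.Icc 1 n, T k ω

/-- The inverse time change `τ⁻¹_n = inf {m ≥ 1 : τ_m ≥ n}`. -/
def tauInv {Ω : Type} (T : ℕ → Ω → ℕ) (n : ℕ) (ω : Ω) : ℕ :=
  sInf {m : ℕ | 1 ≤ m ∧ n ≤ tauT T m ω}

/-- The σ-field `F_k = σ(D_1, T_1, …, D_k, T_k)`. -/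
def walkSigma {Ω β : Type} [MeasurableSpace Ω] [MeasurableSpace β]
    (D : ℕ → Ω → β) (T : ℕ → Ω → ℕ) (k : ℕ) : MeasurableSpace Ω :=
  ⨆ m ∈ Finset.Icc 1 k,
    (MeasurableSpace.comap (D m) inferInstance ⊔ MeasurableSpace.comap (T m) inferInstance)

/-- The filtration `(F_{n+1})_{n ≥ 0}`, i.e. `(F_n)_{n ≥ 1}` reindexed from `0`. -/
def walkFiltration {Ω β : Type} [m0 : MeasurableSpace Ω] [MeasurableSpace β]
    (D : ℕ → Ω → β) (T : ℕ → Ω → ℕ)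
    (measD : ∀ m, Measurable (D m)) (measT : ∀ m, Measurable (T m)) :
    Filtration ℕ m0 where
  seq n := walkSigma D T (n + 1)
  mono' := by
    intro i j hij
    refine iSup_le fun m => iSup_le fun hm => ?_
    refine le_iSup₂_of_le m ?_ le_rfl
    simp only [Finset.mem_Icc] at hm ⊢
    omega
  le' := by
    intro n
    refine iSup_le fun m => iSup_le fun _ => sup_le ?_ ?_
    · exact (measD m).comap_le
    · exact (measT m).comap_le

section helpers
variable {Ω β : Type}

theorem tauT_mono (T : ℕ → Ω → ℕ) (ω : Ω) : Monotone fun m => tauT T m ω := by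
  intro a b hab
  exact Finset.sum_le_sum_of_subset (Finset.Icc_subset_Icc_right hab)

theorem self_le_tauT (T : ℕ → Ω → ℕ) (T_pos : ∀ m ω, 1 ≤ T m ω) (n : ℕ) (ω : Ω) :
    n ≤ tauT T n ω := by
  calc n = ∑ _k ∈ Finset.Icc 1 n, 1 := by simp
  _ ≤ tauT T n ω := Finset.sum_le_sum fun k _ => T_pos k ω

theorem tauInv_le_iff (T : ℕ → Ω → ℕ) (T_pos : ∀ m ω, 1 ≤ T m ω) (n k : ℕ) (hk : 1 ≤ k) :
    {ω | tauInv T n ω ≤ k} = {ω | n ≤ tauT T k ω} := by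
  ext ω
  simp only [Set.mem_setOf_eq, tauInv]
  constructor
  · intro hle
    rcases Nat.eq_zero_or_pos n with hn | hn
    · omega
    · have hne : {m : ℕ | 1 ≤ m ∧ n ≤ tauT T m ω}.Nonempty :=
        ⟨n, hn, self_le_tauT T T_pos n ω⟩
      obtain ⟨h1, h2⟩ := Nat.sInf_mem hne
      exact le_trans h2 (tauT_mono T ω hle)
  · intro hle
    exact Nat.sInf_le ⟨hk, hle⟩

theorem measurable_tauT_walkSigma [MeasurableSpace Ω] [MeasurableSpace β]
    (D : ℕ → Ω → β) (T : ℕ → Ω → ℕ) (k : ℕ) :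
    Measurable[walkSigma D T k] (tauT T k) := by
  apply Finset.measurable_sum
  intro m hm
  refine measurable_iff_comap_le.2 (le_trans ?_ (le_iSup₂_of_le m hm le_rfl))
  exact le_sup_right

theorem measurableSet_tauInv_le [MeasurableSpace Ω] [MeasurableSpace β]
    (D : ℕ → Ω → β) (T : ℕ → Ω → ℕ) (T_pos : ∀ m ω, 1 ≤ T m ω) (n k : ℕ) (hk : 1 ≤ k) :
    MeasurableSet[walkSigma D T k] {ω | tauInv T n ω ≤ k} := by
  rw [tauInv_le_iff T T_pos n k hk]
  exact measurable_tauT_walkSigma D T k measurableSet_Ici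

end helpers

/-- The σ-field `{A : A ∩ {σ ≤ k} ∈ F_k for all k = 1, …, n}` associated with a
random time `σ` bounded by `n`. -/
def stoppedSigma {Ω : Type} (F : ℕ → MeasurableSpace Ω) (σf : Ω → ℕ) (n : ℕ)
    (h : ∀ k, 1 ≤ k → k ≤ n → MeasurableSet[F k] {ω | σf ω ≤ k}) : MeasurableSpace Ω where
  MeasurableSet' A := ∀ k, 1 ≤ k → k ≤ n → MeasurableSet[F k] (A ∩ {ω | σf ω ≤ k})
  measurableSet_empty := fun k _ _ => by
    simp
  measurableSet_compl := fun A hA k hk1 hk2 => by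
    have hs : MeasurableSet[F k] {ω | σf ω ≤ k} := h k hk1 hk2
    have heq : Aᶜ ∩ {ω | σf ω ≤ k} = {ω | σf ω ≤ k} \ (A ∩ {ω | σf ω ≤ k}) := by
      ext ω; by_cases hω : σf ω ≤ k <;> simp [hω]
    rw [heq]
    exact hs.diff (hA k hk1 hk2)
  measurableSet_iUnion := fun s hs k hk1 hk2 => by
    rw [Set.iUnion_inter]
    exact MeasurableSet.iUnion fun i => hs i k hk1 hk2

/-- The σ-field `F_{τ⁻¹_n} = {A : A ∩ {τ⁻¹_n ≤ k} ∈ F_k for all k = 1, …, n}`. -/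
def Fstop {Ω β : Type} [MeasurableSpace Ω] [MeasurableSpace β]
    (D : ℕ → Ω → β) (T : ℕ → Ω → ℕ) (T_pos : ∀ m ω, 1 ≤ T m ω) (n : ℕ) :
    MeasurableSpace Ω :=
  stoppedSigma (walkSigma D T) (tauInv T n) n
    (fun k hk1 _ => measurableSet_tauInv_le D T T_pos n k hk1)

/-- Setup for the persistent time-changed walk: i.i.d. times `(T_m)_{m ≥ 1}` with values in
`{1, 2, …}`, directions `(D_m)_{m ≥ 1}` forming the persistent Markov chain on the `2d` unit
vectors (uniform start, each next direction uniform among the `2d - 1` directions different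
from the previous one), independent of the times. The law of the direction sequence is
specified through its path probabilities. -/
structure PersistentWalk (d : ℕ) (Ω : Type) [MeasurableSpace Ω] (μ : Measure Ω) where
  T : ℕ → Ω → ℕ
  D : ℕ → Ω → EuclideanSpace ℝ (Fin d)
  measT : ∀ m, Measurable (T m)
  measD : ∀ m, Measurable (D m)
  T_pos : ∀ m ω, 1 ≤ T m ω
  T_iid : iIndepFun (fun m : ℕ => T (m + 1)) μ
  T_ident : ∀ m : ℕ, IdentDistrib (T (m + 1)) (T 1) μ μ
  D_mem : ∀ m ω, D m ω ∈ unitVecs d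
  D_path : ∀ n : ℕ, 1 ≤ n → ∀ v : ℕ → EuclideanSpace ℝ (Fin d),
    (∀ m, v m ∈ unitVecs d) →
    (∀ m, 1 ≤ m → m + 1 ≤ n → v (m + 1) ≠ v m) →
    μ {ω | ∀ m, 1 ≤ m → m ≤ n → D m ω = v m}
      = ENNReal.ofReal ((2 * (d : ℝ))⁻¹ * ((2 * (d : ℝ) - 1)⁻¹) ^ (n - 1))
  DT_indep : IndepFun (fun ω m => D m ω) (fun ω m => T m ω) μ

namespace PersistentWalk

variable {d : ℕ} {Ω : Type} [MeasurableSpace Ω] {μ : Measure Ω}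

/-- The persistent time-changed walk `W^p_n = ∑_{m=1}^n D_m T_m`. -/
def W (Wk : PersistentWalk d Ω μ) (n : ℕ) (ω : Ω) : EuclideanSpace ℝ (Fin d) :=
  ∑ m ∈ Finset.Icc 1 n, (Wk.T m ω : ℝ) • Wk.D m ω

/-- The expectation `E(T)` of the generic time. -/
def ET (Wk : PersistentWalk d Ω μ) : ℝ := ∫ ω, (Wk.T 1 ω : ℝ) ∂μ

/-- The second moment `E(T²)` of the generic time. -/
def ET2 (Wk : PersistentWalk d Ω μ) : ℝ := ∫ ω, (Wk.T 1 ω : ℝ) ^ 2 ∂μ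

/-- The diffusion constant `C^p = (d E(T²) - E(T)²)/d`. -/
def Cp (Wk : PersistentWalk d Ω μ) : ℝ := ((d : ℝ) * Wk.ET2 - Wk.ET ^ 2) / d

/-- The martingale `M^p_n = W^p_n - (E(T)/(2d)) D_n`. -/
def M (Wk : PersistentWalk d Ω μ) (n : ℕ) (ω : Ω) : EuclideanSpace ℝ (Fin d) :=
  Wk.W n ω - (Wk.ET / (2 * d)) • Wk.D n ω

/-- The senile persistent random walk
`S^p_n = W^p_{τ⁻¹_n} + D_{τ⁻¹_n} (n - τ_{τ⁻¹_n})`, with `S^p_0 = 0`. -/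
def S (Wk : PersistentWalk d Ω μ) (n : ℕ) (ω : Ω) : EuclideanSpace ℝ (Fin d) :=
  if n = 0 then 0 else
    Wk.W (tauInv Wk.T n ω) ω
      + ((n : ℝ) - (tauT Wk.T (tauInv Wk.T n ω) ω : ℝ)) • Wk.D (tauInv Wk.T n ω) ω

end PersistentWalk

/-!
Expanding the square and using the independence of times and directions,
`E|W_n|² = ∑_{m, k ≤ n} E(T_m T_k) E⟨D_m, D_k⟩`, where `E(T_m T_k) = E(T)²` off the diagonal.
All non-backtracking direction paths of a given length are equally likely and together carry
full mass. Summing over the last step of such a path replaces `D_{k+1}` by the mean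
`-D_k / (2d - 1)` of the unit vectors other than `D_k`, so `E⟨D_m, D_k⟩ = (-1/(2d-1))^|m-k|`,
and the formula is the evaluation of a geometric double sum.
-/

open Finset

lemma EuclideanSpace.single_eq_single_iff_of_ne_zero {𝕜 ι : Type*} [RCLike 𝕜] [DecidableEq ι]
    {i j : ι} {a b : 𝕜} (ha : a ≠ 0) :
    EuclideanSpace.single i a = EuclideanSpace.single j b ↔ i = j ∧ a = b := by
  refine ⟨fun h => ?_, fun ⟨hij, hab⟩ => hij ▸ hab ▸ rfl⟩
  have hi := congrArg (· i) h
  by_cases hij : i = j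
  · subst hij
    simpa using hi
  · simp [hij, ha] at hi

lemma norm_sum_smul_sq {ι E : Type*} [NormedAddCommGroup E] [InnerProductSpace ℝ E]
    (s : Finset ι) (c : ι → ℝ) (x : ι → E) :
    ‖∑ i ∈ s, c i • x i‖ ^ 2 = ∑ i ∈ s, ∑ j ∈ s, c i * c j * inner ℝ (x i) (x j) := by
  rw [← real_inner_self_eq_norm_sq, sum_inner]
  simp_rw [inner_sum, real_inner_smul_left, real_inner_smul_right, mul_assoc]

section DistanceSums

lemma sum_ite_mul_pow_dist (a b r : ℝ) (n : ℕ) :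
    ∑ m ∈ Icc 1 n, ∑ k ∈ Icc 1 n, (if m = k then a else b) * r ^ Nat.dist m k =
      n * (a - b) + b * ∑ m ∈ Icc 1 n, ∑ k ∈ Icc 1 n, r ^ Nat.dist m k := by
  have hsplit : ∀ m k, (if m = k then a else b) * r ^ Nat.dist m k =
      (if m = k then a - b else 0) + b * r ^ Nat.dist m k := by
    intro m k
    split_ifs with h
    · rw [h, Nat.dist_self]; ring
    · ring
  simp_rw [hsplit, sum_add_distrib, sum_ite_eq, mul_sum]
  rw [sum_ite_mem, inter_self, sum_const, Nat.card_Icc, nsmul_eq_mul, Nat.add_sub_cancel]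

lemma one_sub_mul_sum_pow_dist_succ (r : ℝ) (n : ℕ) :
    (1 - r) * ∑ m ∈ Icc 1 n, r ^ Nat.dist m (n + 1) = r * (1 - r ^ n) := by
  induction n with
  | zero => simp
  | succ n ih =>
    have hshift : ∀ m ∈ Icc 1 n, r ^ Nat.dist m (n + 1 + 1) = r * r ^ Nat.dist m (n + 1) := by
      intro m hm
      rw [mem_Icc] at hm
      rw [Nat.dist_eq_sub_of_le (by omega), Nat.dist_eq_sub_of_le (by omega),
        show n + 1 + 1 - m = n + 1 - m + 1 by omega, pow_succ, mul_comm]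
    rw [sum_Icc_succ_top (by omega), sum_congr rfl hshift, ← mul_sum,
      Nat.dist_eq_sub_of_le (by omega), show n + 1 + 1 - (n + 1) = 1 by omega]
    linear_combination r * ih

lemma one_sub_sq_mul_sum_sum_pow_dist (r : ℝ) (n : ℕ) :
    (1 - r) ^ 2 * ∑ m ∈ Icc 1 n, ∑ k ∈ Icc 1 n, r ^ Nat.dist m k =
      n * (1 - r ^ 2) - 2 * r * (1 - r ^ n) := by
  induction n with
  | zero => simp
  | succ n ih =>
    have hrows : ∑ m ∈ Icc 1 n, ∑ k ∈ Icc 1 (n + 1), r ^ Nat.dist m k =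
        ∑ m ∈ Icc 1 n, ∑ k ∈ Icc 1 n, r ^ Nat.dist m k +
          ∑ m ∈ Icc 1 n, r ^ Nat.dist m (n + 1) := by
      rw [← sum_add_distrib]
      exact sum_congr rfl fun m _ => sum_Icc_succ_top (by omega) _
    rw [sum_Icc_succ_top (by omega), hrows, sum_Icc_succ_top (by omega), Nat.dist_self]
    simp_rw [Nat.dist_comm (n + 1)]
    push_cast
    linear_combination ih + 2 * (1 - r) * one_sub_mul_sum_pow_dist_succ r n

lemma sum_sum_neg_inv_pow_dist {d : ℕ} (hd : 1 ≤ d) (n : ℕ) :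
    ∑ m ∈ Icc 1 n, ∑ k ∈ Icc 1 n, (-1 / (2 * (d : ℝ) - 1)) ^ Nat.dist m k =
      n - ((n : ℝ) / d + ((2 * (d : ℝ) - 1) / (2 * (d : ℝ) ^ 2)) *
        ((-1 / (2 * (d : ℝ) - 1)) ^ n - 1)) := by
  have h := one_sub_sq_mul_sum_sum_pow_dist (-1 / (2 * (d : ℝ) - 1)) n
  generalize (-1 / (2 * (d : ℝ) - 1)) ^ n = x at h ⊢
  generalize ∑ m ∈ Icc 1 n, ∑ k ∈ Icc 1 n, (-1 / (2 * (d : ℝ) - 1)) ^ Nat.dist m k = S at h ⊢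
  have hd' : (1 : ℝ) ≤ d := by exact_mod_cast hd
  have h2d : (2 * d - 1 : ℝ) ≠ 0 := by linarith
  field_simp at h ⊢
  linear_combination (1 / 2 : ℝ) * h

end DistanceSums

section UnitVectors

variable {d : ℕ}

def unitVecFinset (d : ℕ) : Finset (EuclideanSpace ℝ (Fin d)) :=
  (univ ×ˢ {1, -1}).image fun p : Fin d × ℝ => EuclideanSpace.single p.1 p.2

lemma mem_unitVecFinset {v : EuclideanSpace ℝ (Fin d)} :
    v ∈ unitVecFinset d ↔ v ∈ unitVecs d := by
  simp [unitVecFinset, unitVecs, eq_comm]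

lemma injOn_single_product_pair :
    Set.InjOn (fun p : Fin d × ℝ => EuclideanSpace.single p.1 p.2)
      ↑(univ ×ˢ {1, -1} : Finset (Fin d × ℝ)) := by
  rintro ⟨i, a⟩ ha ⟨j, b⟩ - h
  have ha0 : a ≠ 0 := by
    simp only [coe_product, coe_univ, coe_pair, Set.mem_prod, Set.mem_insert_iff] at ha
    rcases ha with ⟨-, rfl | rfl⟩ <;> norm_num
  simpa using (EuclideanSpace.single_eq_single_iff_of_ne_zero ha0).1 h

lemma card_unitVecFinset : #(unitVecFinset d) = 2 * d := by
  rw [unitVecFinset, card_image_of_injOn injOn_single_product_pair, card_product, card_univ,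
    Fintype.card_fin, card_pair (by norm_num), mul_comm]

lemma sum_unitVecFinset : ∑ w ∈ unitVecFinset d, w = 0 := by
  rw [unitVecFinset, sum_image injOn_single_product_pair, sum_product]
  simp [sum_pair (show (1 : ℝ) ≠ -1 by norm_num), PiLp.single_neg]

lemma norm_eq_one_of_mem_unitVecs {v : EuclideanSpace ℝ (Fin d)} (hv : v ∈ unitVecs d) :
    ‖v‖ = 1 := by
  obtain ⟨i, rfl | rfl⟩ := hv <;> simp

end UnitVectors

section NonBacktrackingPaths

variable {d : ℕ}

structure IsNonBacktrackingPath (k : ℕ) (v : ℕ → EuclideanSpace ℝ (Fin d)) : Prop where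
  mem_unitVecs : ∀ n ∈ Icc 1 k, v n ∈ unitVecs d
  eq_zero : ∀ n ∉ Icc 1 k, v n = 0
  ne_prev : ∀ n, 1 ≤ n → n + 1 ≤ k → v (n + 1) ≠ v n

open Classical in
def nonBacktrackingPaths (d : ℕ) : ℕ → Finset (ℕ → EuclideanSpace ℝ (Fin d))
  | 0 => {0}
  | k + 1 => (nonBacktrackingPaths d k).biUnion fun v =>
      ((unitVecFinset d).erase (v k)).image (Function.update v (k + 1))

lemma IsNonBacktrackingPath.of_mem {k : ℕ} {v : ℕ → EuclideanSpace ℝ (Fin d)}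
    (hv : v ∈ nonBacktrackingPaths d k) : IsNonBacktrackingPath k v := by
  induction k generalizing v with
  | zero =>
    rw [nonBacktrackingPaths, mem_singleton] at hv
    subst hv
    exact ⟨by simp, fun _ _ => rfl, fun n hn hn' => by omega⟩
  | succ k ih =>
    simp only [nonBacktrackingPaths, mem_biUnion, mem_image, mem_erase] at hv
    obtain ⟨u, hu, w, ⟨hwu, hw⟩, rfl⟩ := hv
    obtain ⟨hu_mem, hu_zero, hu_nb⟩ := ih hu
    refine ⟨fun n hn => ?_, fun n hn => ?_, fun n hn hnk => ?_⟩
    · rcases eq_or_ne n (k + 1) with rfl | hne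
      · simpa using mem_unitVecFinset.1 hw
      · rw [Function.update_of_ne hne]
        exact hu_mem n (by simp at hn ⊢; omega)
    · rw [Function.update_of_ne (by simp at hn; omega)]
      exact hu_zero n (by simp at hn ⊢; omega)
    · rw [Function.update_of_ne (by omega : n ≠ k + 1)]
      rcases eq_or_ne n k with rfl | hne
      · simpa using hwu
      · rw [Function.update_of_ne (by omega)]
        exact hu_nb n hn (by omega)

lemma eq_of_mem_nonBacktrackingPaths {k : ℕ} {u v : ℕ → EuclideanSpace ℝ (Fin d)}
    (hu : u ∈ nonBacktrackingPaths d k) (hv : v ∈ nonBacktrackingPaths d k)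
    (h : ∀ n ∈ Icc 1 k, u n = v n) : u = v := by
  funext n
  by_cases hn : n ∈ Icc 1 k
  · exact h n hn
  · rw [(IsNonBacktrackingPath.of_mem hu).eq_zero n hn,
      (IsNonBacktrackingPath.of_mem hv).eq_zero n hn]

lemma update_eq_update_of_mem_nonBacktrackingPaths {k : ℕ}
    {u v : ℕ → EuclideanSpace ℝ (Fin d)} (hu : u ∈ nonBacktrackingPaths d k)
    (hv : v ∈ nonBacktrackingPaths d k)
    {w w' : EuclideanSpace ℝ (Fin d)}
    (h : Function.update u (k + 1) w = Function.update v (k + 1) w') : u = v ∧ w = w' := by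
  refine ⟨eq_of_mem_nonBacktrackingPaths hu hv fun n hn => ?_, by simpa using congrFun h (k + 1)⟩
  simpa [Function.update_of_ne (show n ≠ k + 1 by simp at hn; omega)] using congrFun h n

lemma sum_nonBacktrackingPaths_succ {M : Type*} [AddCommMonoid M] (k : ℕ)
    (f : (ℕ → EuclideanSpace ℝ (Fin d)) → M) :
    ∑ v ∈ nonBacktrackingPaths d (k + 1), f v =
      ∑ v ∈ nonBacktrackingPaths d k, ∑ w ∈ (unitVecFinset d).erase (v k),
        f (Function.update v (k + 1) w) := by
  classical
  rw [nonBacktrackingPaths, sum_biUnion]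
  · refine sum_congr rfl fun v hv => sum_image fun w _ w' _ h => ?_
    exact (update_eq_update_of_mem_nonBacktrackingPaths hv hv h).2
  · intro u hu v hv huv
    simp only [Function.onFun, disjoint_left, mem_image]
    rintro _ ⟨w, -, rfl⟩ ⟨w', -, h⟩
    exact huv (update_eq_update_of_mem_nonBacktrackingPaths hu hv h.symm).1

lemma card_nonBacktrackingPaths_succ (k : ℕ) :
    #(nonBacktrackingPaths d (k + 1)) = 2 * d * (2 * d - 1) ^ k := by
  induction k with
  | zero =>
    have h0 : (0 : EuclideanSpace ℝ (Fin d)) ∉ unitVecFinset d := fun h => by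
      simpa using norm_eq_one_of_mem_unitVecs (mem_unitVecFinset.1 h)
    rw [card_eq_sum_ones, sum_nonBacktrackingPaths_succ]
    simp [nonBacktrackingPaths, erase_eq_of_notMem h0, card_unitVecFinset]
  | succ k ih =>
    rw [card_eq_sum_ones, sum_nonBacktrackingPaths_succ, pow_succ, ← mul_assoc, ← ih,
      card_eq_sum_ones, sum_mul]
    refine sum_congr rfl fun v hv => ?_
    have hvk : v (k + 1) ∈ unitVecFinset d :=
      mem_unitVecFinset.2 ((IsNonBacktrackingPath.of_mem hv).mem_unitVecs _ (by simp))
    simp [card_erase_of_mem hvk, card_unitVecFinset]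

/-- Summing over the next step kills the mean direction, which reverses the sign of the
correlation with an earlier step. -/
lemma sum_inner_nonBacktrackingPaths {m : ℕ} (hm : 1 ≤ m) (j : ℕ) :
    ∑ v ∈ nonBacktrackingPaths d (m + j), inner ℝ (v m) (v (m + j)) =
      (-1) ^ j * #(nonBacktrackingPaths d m) := by
  induction j with
  | zero =>
    rw [card_eq_sum_ones, Nat.cast_sum, pow_zero, one_mul]
    refine sum_congr rfl fun v hv => ?_
    have hvm := (IsNonBacktrackingPath.of_mem hv).mem_unitVecs m (by simp; omega)
    rw [add_zero, real_inner_self_eq_norm_sq, norm_eq_one_of_mem_unitVecs hvm, one_pow,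
      Nat.cast_one]
  | succ j ih =>
    rw [← add_assoc, sum_nonBacktrackingPaths_succ, pow_succ, mul_comm _ (-1 : ℝ), mul_assoc,
      ← ih, mul_sum]
    simp_rw [neg_one_mul]
    refine sum_congr rfl fun v hv => ?_
    have hvk : v (m + j) ∈ unitVecFinset d :=
      mem_unitVecFinset.2 ((IsNonBacktrackingPath.of_mem hv).mem_unitVecs _ (by simp; omega))
    simp only [Function.update_self, Function.update_of_ne (show m ≠ m + j + 1 by omega)]
    rw [← inner_sum, sum_erase_eq_sub hvk, sum_unitVecFinset, zero_sub, inner_neg_right]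

end NonBacktrackingPaths

/-- The probability that `D_path` gives each non-backtracking path of length `k`. -/
def pathProb (d k : ℕ) : ℝ := (2 * (d : ℝ))⁻¹ * ((2 * (d : ℝ) - 1)⁻¹) ^ (k - 1)

section PathProb

variable {d : ℕ}

lemma pathProb_nonneg (hd : 1 ≤ d) (k : ℕ) : 0 ≤ pathProb d k := by
  have hd' : (1 : ℝ) ≤ d := by exact_mod_cast hd
  have : (0 : ℝ) ≤ 2 * d - 1 := by linarith
  unfold pathProb
  positivity

lemma pathProb_add {m : ℕ} (hm : 1 ≤ m) (j : ℕ) :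
    pathProb d (m + j) = pathProb d m * ((2 * (d : ℝ) - 1)⁻¹) ^ j := by
  rw [pathProb, pathProb, show m + j - 1 = m - 1 + j by omega, pow_add, mul_assoc]

lemma card_nonBacktrackingPaths_mul_pathProb (hd : 1 ≤ d) {k : ℕ} (hk : 1 ≤ k) :
    #(nonBacktrackingPaths d k) * pathProb d k = 1 := by
  obtain ⟨k, rfl⟩ := Nat.exists_eq_add_of_le' hk
  have hd' : (1 : ℝ) ≤ d := by exact_mod_cast hd
  have h2d : (2 * d - 1 : ℝ) ≠ 0 := by linarith
  rw [card_nonBacktrackingPaths_succ, pathProb, Nat.add_sub_cancel]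
  push_cast [show 1 ≤ 2 * d by omega]
  rw [inv_pow]
  field_simp

end PathProb

namespace PersistentWalk

variable {d : ℕ} {Ω : Type} [MeasurableSpace Ω] {μ : Measure Ω} (Wk : PersistentWalk d Ω μ)

def pathEvent (k : ℕ) (v : ℕ → EuclideanSpace ℝ (Fin d)) : Set Ω :=
  {ω | ∀ n, 1 ≤ n → n ≤ k → Wk.D n ω = v n}

lemma measurableSet_pathEvent (k : ℕ) (v : ℕ → EuclideanSpace ℝ (Fin d)) :
    MeasurableSet (Wk.pathEvent k v) := by
  have : Wk.pathEvent k v = ⋂ n ∈ Icc 1 k, Wk.D n ⁻¹' {v n} := by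
    ext ω
    simp [pathEvent, and_imp]
  rw [this]
  exact (Icc 1 k).measurableSet_biInter fun n _ => Wk.measD n (measurableSet_singleton _)

lemma pairwiseDisjoint_pathEvent (k : ℕ) :
    (nonBacktrackingPaths d k : Set (ℕ → EuclideanSpace ℝ (Fin d))).PairwiseDisjoint
      (Wk.pathEvent k) := by
  intro u hu v hv huv
  refine Set.disjoint_left.2 fun ω hωu hωv => huv ?_
  refine eq_of_mem_nonBacktrackingPaths hu hv fun n hn => ?_
  rw [mem_Icc] at hn
  rw [← hωu n hn.1 hn.2, ← hωv n hn.1 hn.2]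

lemma measure_pathEvent {k : ℕ} (hk : 1 ≤ k) {v : ℕ → EuclideanSpace ℝ (Fin d)}
    (hv : v ∈ nonBacktrackingPaths d k) :
    μ (Wk.pathEvent k v) = ENNReal.ofReal (pathProb d k) := by
  obtain ⟨hv_mem, -, hv_nb⟩ := IsNonBacktrackingPath.of_mem hv
  -- `D_path` wants a path of unit vectors at every index, so repeat `v 1` outside `[1, k]`
  set v' : ℕ → EuclideanSpace ℝ (Fin d) := fun n => if 1 ≤ n ∧ n ≤ k then v n else v 1
  have hv' : Wk.pathEvent k v' = Wk.pathEvent k v := by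
    ext ω
    refine forall_congr' fun n => imp_congr_right fun h1 => imp_congr_right fun h2 => ?_
    simp [v', h1, h2]
  rw [← hv']
  refine Wk.D_path k hk v' (fun n => ?_) fun n h1 h2 => ?_
  · by_cases hn : 1 ≤ n ∧ n ≤ k
    · simpa [v', hn] using hv_mem n (mem_Icc.2 hn)
    · simpa [v', hn] using hv_mem 1 (mem_Icc.2 ⟨le_rfl, hk⟩)
  · simpa [v', h1, h2, show 1 ≤ n + 1 by omega, show n ≤ k by omega] using hv_nb n h1 h2

lemma measure_biUnion_pathEvent (hd : 1 ≤ d) {k : ℕ} (hk : 1 ≤ k) :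
    μ (⋃ v ∈ nonBacktrackingPaths d k, Wk.pathEvent k v) = 1 := by
  rw [measure_biUnion_finset (Wk.pairwiseDisjoint_pathEvent k)
      fun v _ => Wk.measurableSet_pathEvent k v,
    sum_congr rfl fun v hv => Wk.measure_pathEvent hk hv, sum_const, nsmul_eq_mul,
    ← ENNReal.ofReal_natCast, ← ENNReal.ofReal_mul (by positivity),
    card_nonBacktrackingPaths_mul_pathProb hd hk, ENNReal.ofReal_one]

lemma identDistrib_T {m : ℕ} (hm : 1 ≤ m) : IdentDistrib (Wk.T m) (Wk.T 1) μ μ := by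
  simpa [Nat.sub_add_cancel hm] using Wk.T_ident (m - 1)

lemma indepFun_T {m k : ℕ} (hm : 1 ≤ m) (hk : 1 ≤ k) (hmk : m ≠ k) :
    IndepFun (Wk.T m) (Wk.T k) μ := by
  simpa [Nat.sub_add_cancel hm, Nat.sub_add_cancel hk] using
    Wk.T_iid.indepFun (show m - 1 ≠ k - 1 by omega)

lemma integral_T {m : ℕ} (hm : 1 ≤ m) : ∫ ω, (Wk.T m ω : ℝ) ∂μ = Wk.ET :=
  ((Wk.identDistrib_T hm).comp measurable_from_top).integral_eq

lemma memLp_T (hT2 : Integrable (fun ω => (Wk.T 1 ω : ℝ) ^ 2) μ) {m : ℕ} (hm : 1 ≤ m) :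
    MemLp (fun ω => (Wk.T m ω : ℝ)) 2 μ :=
  ((Wk.identDistrib_T hm).comp measurable_from_top).memLp_iff.2 <|
    (memLp_two_iff_integrable_sq (measurable_from_top.comp (Wk.measT 1)).aestronglyMeasurable).2 hT2

lemma integral_T_mul_T (hT2 : Integrable (fun ω => (Wk.T 1 ω : ℝ) ^ 2) μ) {m k : ℕ}
    (hm : 1 ≤ m) (hk : 1 ≤ k) :
    ∫ ω, (Wk.T m ω : ℝ) * Wk.T k ω ∂μ = if m = k then Wk.ET2 else Wk.ET ^ 2 := by
  split_ifs with hmk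
  · subst hmk
    simp_rw [← sq]
    exact ((Wk.identDistrib_T hm).comp
      (measurable_from_top (f := fun t : ℕ => (t : ℝ) ^ 2))).integral_eq
  · calc ∫ ω, (Wk.T m ω : ℝ) * Wk.T k ω ∂μ
        = (∫ ω, (Wk.T m ω : ℝ) ∂μ) * ∫ ω, (Wk.T k ω : ℝ) ∂μ :=
          ((Wk.indepFun_T hm hk hmk).comp measurable_from_top
            measurable_from_top).integral_fun_mul_eq_mul_integral
            (Wk.memLp_T hT2 hm).aestronglyMeasurable (Wk.memLp_T hT2 hk).aestronglyMeasurable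
      _ = Wk.ET ^ 2 := by rw [Wk.integral_T hm, Wk.integral_T hk, sq]

lemma indepFun_inner_D_T_mul_T (m k : ℕ) :
    IndepFun (fun ω => inner ℝ (Wk.D m ω) (Wk.D k ω)) (fun ω => (Wk.T m ω : ℝ) * Wk.T k ω) μ :=
  Wk.DT_indep.comp (φ := fun v : ℕ → EuclideanSpace ℝ (Fin d) => inner ℝ (v m) (v k))
    (ψ := fun t : ℕ → ℕ => (t m : ℝ) * t k)
    ((measurable_pi_apply m).inner (measurable_pi_apply k))
    ((measurable_from_top.comp (measurable_pi_apply m)).mul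
      (measurable_from_top.comp (measurable_pi_apply k)))

variable [IsProbabilityMeasure μ]

lemma integrable_inner_D (m k : ℕ) :
    Integrable (fun ω => inner ℝ (Wk.D m ω) (Wk.D k ω)) μ := by
  refine .of_bound ((Wk.measD m).inner (Wk.measD k)).aestronglyMeasurable 1
    (ae_of_all μ fun ω => ?_)
  calc ‖inner ℝ (Wk.D m ω) (Wk.D k ω)‖ ≤ ‖Wk.D m ω‖ * ‖Wk.D k ω‖ := norm_inner_le_norm _ _
    _ = 1 := by
      rw [norm_eq_one_of_mem_unitVecs (Wk.D_mem m ω), norm_eq_one_of_mem_unitVecs (Wk.D_mem k ω),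
        mul_one]

/-- Averaging over the non-backtracking paths of length `m + j`, which carry equal mass and
cover `Ω` up to a null set. -/
lemma integral_inner_D_add (hd : 1 ≤ d) {m : ℕ} (hm : 1 ≤ m) (j : ℕ) :
    ∫ ω, inner ℝ (Wk.D m ω) (Wk.D (m + j) ω) ∂μ = (-1 / (2 * (d : ℝ) - 1)) ^ j := by
  set k := m + j
  have hk : 1 ≤ k := by omega
  set U := ⋃ v ∈ nonBacktrackingPaths d k, Wk.pathEvent k v
  have hU : U =ᵐ[μ] Set.univ := ae_eq_univ.2 <|
    (prob_compl_eq_zero_iff ((nonBacktrackingPaths d k).measurableSet_biUnion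
      fun v _ => Wk.measurableSet_pathEvent k v)).2 (Wk.measure_biUnion_pathEvent hd hk)
  have hconst : ∀ v, ∀ ω ∈ Wk.pathEvent k v,
      inner ℝ (Wk.D m ω) (Wk.D k ω) = inner ℝ (v m) (v k) := fun v ω hω => by
    rw [hω m hm (by omega), hω k hk le_rfl]
  calc ∫ ω, inner ℝ (Wk.D m ω) (Wk.D k ω) ∂μ
      = ∑ v ∈ nonBacktrackingPaths d k,
          ∫ ω in Wk.pathEvent k v, inner ℝ (Wk.D m ω) (Wk.D k ω) ∂μ := by
        rw [← integral_biUnion_finset _ (fun v _ => Wk.measurableSet_pathEvent k v)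
          (Wk.pairwiseDisjoint_pathEvent k) fun v _ => (Wk.integrable_inner_D m k).integrableOn,
          setIntegral_congr_set hU, setIntegral_univ]
    _ = ∑ v ∈ nonBacktrackingPaths d k, pathProb d k * inner ℝ (v m) (v k) := by
        refine sum_congr rfl fun v hv => ?_
        rw [setIntegral_congr_fun (Wk.measurableSet_pathEvent k v) (hconst v), setIntegral_const,
          measureReal_def, Wk.measure_pathEvent hk hv,
          ENNReal.toReal_ofReal (pathProb_nonneg hd k), smul_eq_mul]
    _ = (-1 / (2 * (d : ℝ) - 1)) ^ j := by
        rw [← mul_sum, sum_inner_nonBacktrackingPaths hm, pathProb_add hm, div_eq_mul_inv,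
          mul_pow]
        linear_combination ((-1) ^ j * ((2 * (d : ℝ) - 1)⁻¹) ^ j) *
          card_nonBacktrackingPaths_mul_pathProb hd hm

lemma integral_inner_D (hd : 1 ≤ d) {m k : ℕ} (hm : 1 ≤ m) (hk : 1 ≤ k) :
    ∫ ω, inner ℝ (Wk.D m ω) (Wk.D k ω) ∂μ = (-1 / (2 * (d : ℝ) - 1)) ^ Nat.dist m k := by
  rcases le_total m k with h | h
  · obtain ⟨j, rfl⟩ := Nat.exists_eq_add_of_le h
    rw [Nat.dist_eq_sub_of_le h, Nat.add_sub_cancel_left, Wk.integral_inner_D_add hd hm]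
  · obtain ⟨j, rfl⟩ := Nat.exists_eq_add_of_le h
    simp_rw [real_inner_comm (Wk.D k _)]
    rw [Nat.dist_eq_sub_of_le_right h, Nat.add_sub_cancel_left, Wk.integral_inner_D_add hd hk]

lemma integrable_T_mul_T_mul_inner_D (hT2 : Integrable (fun ω => (Wk.T 1 ω : ℝ) ^ 2) μ)
    {m k : ℕ} (hm : 1 ≤ m) (hk : 1 ≤ k) :
    Integrable (fun ω => (Wk.T m ω : ℝ) * Wk.T k ω * inner ℝ (Wk.D m ω) (Wk.D k ω)) μ :=
  (Wk.indepFun_inner_D_T_mul_T m k).symm.integrable_mul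
    ((Wk.memLp_T hT2 hm).integrable_mul (Wk.memLp_T hT2 hk)) (Wk.integrable_inner_D m k)

lemma integral_T_mul_T_mul_inner_D (hd : 1 ≤ d)
    (hT2 : Integrable (fun ω => (Wk.T 1 ω : ℝ) ^ 2) μ) {m k : ℕ} (hm : 1 ≤ m) (hk : 1 ≤ k) :
    ∫ ω, (Wk.T m ω : ℝ) * Wk.T k ω * inner ℝ (Wk.D m ω) (Wk.D k ω) ∂μ =
      (if m = k then Wk.ET2 else Wk.ET ^ 2) * (-1 / (2 * (d : ℝ) - 1)) ^ Nat.dist m k := by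
  rw [← Wk.integral_T_mul_T hT2 hm hk, ← Wk.integral_inner_D hd hm hk,
    (Wk.indepFun_inner_D_T_mul_T m k).symm.integral_fun_mul_eq_mul_integral
      ((Wk.memLp_T hT2 hm).integrable_mul (Wk.memLp_T hT2 hk)).aestronglyMeasurable
      (Wk.integrable_inner_D m k).aestronglyMeasurable]

end PersistentWalk

/-- If `E(T²) < ∞`, then for every `n ≥ 1`,
`E(|W^p_n|²) = n E(T²) - E(T)² (n/d + ((2d-1)/(2d²)) ((-1/(2d-1))^n - 1))`. -/
theorem persistent_second_moment_formula
    {d : ℕ} (hd : 1 ≤ d) {Ω : Type} [MeasurableSpace Ω] {μ : Measure Ω}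
    [IsProbabilityMeasure μ] (Wk : PersistentWalk d Ω μ)
    (hT2 : Integrable (fun ω => (Wk.T 1 ω : ℝ) ^ 2) μ) :
    ∀ n : ℕ, 1 ≤ n →
      ∫ ω, ‖Wk.W n ω‖ ^ 2 ∂μ
        = (n : ℝ) * Wk.ET2
          - Wk.ET ^ 2 * ((n : ℝ) / d
            + ((2 * (d : ℝ) - 1) / (2 * (d : ℝ) ^ 2))
              * ((-1 / (2 * (d : ℝ) - 1)) ^ n - 1)) := by
  intro n _
  have hpos : ∀ m ∈ Icc 1 n, 1 ≤ m := fun m hm => (mem_Icc.1 hm).1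
  calc ∫ ω, ‖Wk.W n ω‖ ^ 2 ∂μ
      = ∑ m ∈ Icc 1 n, ∑ k ∈ Icc 1 n,
          ∫ ω, (Wk.T m ω : ℝ) * Wk.T k ω * inner ℝ (Wk.D m ω) (Wk.D k ω) ∂μ := by
        simp_rw [PersistentWalk.W, norm_sum_smul_sq]
        rw [integral_finsetSum _ fun m hm => integrable_finsetSum _ fun k hk =>
          Wk.integrable_T_mul_T_mul_inner_D hT2 (hpos m hm) (hpos k hk)]
        exact sum_congr rfl fun m hm => integral_finsetSum _ fun k hk =>
          Wk.integrable_T_mul_T_mul_inner_D hT2 (hpos m hm) (hpos k hk)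
    _ = ∑ m ∈ Icc 1 n, ∑ k ∈ Icc 1 n,
          (if m = k then Wk.ET2 else Wk.ET ^ 2) * (-1 / (2 * (d : ℝ) - 1)) ^ Nat.dist m k :=
        sum_congr rfl fun m hm => sum_congr rfl fun k hk =>
          Wk.integral_T_mul_T_mul_inner_D hd hT2 (hpos m hm) (hpos k hk)
    _ = _ := by
        rw [sum_ite_mul_pow_dist, sum_sum_neg_inv_pow_dist hd]
        ring
end
end

section
/- For all m ≥ 1 and k ≥ 1, the directions of the persistent walk satisfy E(D_m · D_{m+k}) = (−1/(2d−1))^k, where · denotes the Euclidean inner product on ℝ^d. -/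
open MeasureTheory ProbabilityTheory Filter

noncomputable section

/-- The persistent direction chain: `D_1` uniform on the `2d` unit vectors and, given `D_m`,
`D_{m+1}` uniform on the `2d - 1` unit vectors different from `D_m`; the law is specified
through its path probabilities. -/
structure DirectionChain (d : ℕ) (Ω : Type) [MeasurableSpace Ω] (μ : Measure Ω) where
  D : ℕ → Ω → EuclideanSpace ℝ (Fin d)
  measD : ∀ m, Measurable (D m)
  D_mem : ∀ m ω, D m ω ∈ unitVecs d
  D_path : ∀ n : ℕ, 1 ≤ n → ∀ v : ℕ → EuclideanSpace ℝ (Fin d),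
    (∀ m, v m ∈ unitVecs d) →
    (∀ m, 1 ≤ m → m + 1 ≤ n → v (m + 1) ≠ v m) →
    μ {ω | ∀ m, 1 ≤ m → m ≤ n → D m ω = v m}
      = ENNReal.ofReal ((2 * (d : ℝ))⁻¹ * ((2 * (d : ℝ) - 1)⁻¹) ^ (n - 1))

/-! The path `(D_1, …, D_{n+1})` is uniform on the `2d (2d-1)^n` tuples of unit vectors with
distinct consecutive entries: the prescribed probabilities of these cylinders already add up to
`1`, so every other cylinder is null. Since the unit vectors sum to `0`, the `2d - 1` successors
`w ≠ u` of a direction `u` sum to `-u`; averaging over the last step therefore gives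
`E⟪D_m, D_{n+1}⟫ = -(2d-1)⁻¹ E⟪D_m, D_n⟫` for `n ≥ m`, and the claim follows by induction from
`⟪D_m, D_m⟫ = 1`. -/

open Finset

theorem EuclideanSpace.single_left_injective {ι 𝕜 : Type*} [RCLike 𝕜] [DecidableEq ι] {a : 𝕜}
    (ha : a ≠ 0) : Function.Injective fun i : ι => EuclideanSpace.single i a := by
  intro i j h
  simpa [ha] using congrArg (· i) h

def adjDistinctTuples (α : Type*) [Fintype α] [DecidableEq α] (n : ℕ) :
    Finset (Fin (n + 1) → α) :=
  univ.filter fun p => ∀ i : Fin n, p i.succ ≠ p i.castSucc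

section AdjDistinctTuples

variable {α : Type*} [Fintype α] [DecidableEq α]

lemma snoc_mem_adjDistinctTuples {n : ℕ} {q : Fin (n + 1) → α} {a : α} :
    (Fin.snoc q a : Fin (n + 2) → α) ∈ adjDistinctTuples α (n + 1) ↔
      q ∈ adjDistinctTuples α n ∧ a ≠ q (Fin.last n) := by
  simp only [adjDistinctTuples, mem_filter, mem_univ, true_and, Fin.forall_fin_succ' (n := n),
    Fin.succ_castSucc, Fin.succ_last, Fin.snoc_castSucc, Fin.snoc_last]

lemma sum_adjDistinctTuples_succ {M : Type*} [AddCommMonoid M] {n : ℕ}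
    (F : (Fin (n + 2) → α) → M) :
    ∑ p ∈ adjDistinctTuples α (n + 1), F p =
      ∑ q ∈ adjDistinctTuples α n, ∑ a ∈ univ.erase (q (Fin.last n)), F (Fin.snoc q a) := by
  calc ∑ p ∈ adjDistinctTuples α (n + 1), F p
      = ∑ p, if p ∈ adjDistinctTuples α (n + 1) then F p else 0 := by
        rw [sum_ite_mem, univ_inter]
    _ = ∑ q, ∑ a, if (Fin.snoc q a : Fin (n + 2) → α) ∈ adjDistinctTuples α (n + 1)
          then F (Fin.snoc q a) else 0 := by
        rw [← (Fin.snocEquiv fun _ => α).sum_comp, Fintype.sum_prod_type_right]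
        rfl
    _ = ∑ q, if q ∈ adjDistinctTuples α n
          then ∑ a ∈ univ.erase (q (Fin.last n)), F (Fin.snoc q a) else 0 := by
        refine sum_congr rfl fun q _ => ?_
        simp only [snoc_mem_adjDistinctTuples, ite_and]
        split_ifs
        · rw [← sum_filter, filter_ne']
        · exact sum_const_zero
    _ = _ := by rw [sum_ite_mem, univ_inter]

lemma card_adjDistinctTuples (n : ℕ) :
    #(adjDistinctTuples α n) = Fintype.card α * (Fintype.card α - 1) ^ n := by
  induction n with
  | zero => simp [adjDistinctTuples]
  | succ n ih =>
    rw [card_eq_sum_ones, sum_adjDistinctTuples_succ]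
    simp only [sum_const, card_erase_of_mem (mem_univ _), card_univ, smul_eq_mul, mul_one, ih]
    ring

end AdjDistinctTuples

namespace PersistentWalk

variable {d : ℕ}

def unitVecFinset (d : ℕ) : Finset (EuclideanSpace ℝ (Fin d)) :=
  univ.image (fun i => EuclideanSpace.single i 1) ∪
    univ.image (fun i => EuclideanSpace.single i (-1))

abbrev UnitVec (d : ℕ) := {x // x ∈ unitVecFinset d}

lemma mem_unitVecFinset {x : EuclideanSpace ℝ (Fin d)} :
    x ∈ unitVecFinset d ↔ x ∈ unitVecs d := by
  simp only [unitVecFinset, mem_union, mem_image, mem_univ, true_and, unitVecs,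
    Set.mem_ofPred_eq]
  grind

lemma disjoint_image_single_one_image_single_neg_one :
    Disjoint (univ.image fun i : Fin d => EuclideanSpace.single i (1 : ℝ))
      (univ.image fun i : Fin d => EuclideanSpace.single i (-1 : ℝ)) := by
  simp only [disjoint_left, mem_image, mem_univ, true_and, not_exists, forall_exists_index,
    forall_apply_eq_imp_iff]
  intro i j h
  have h_coord := congrArg (· i) h
  simp only [PiLp.single_apply, if_true] at h_coord
  split_ifs at h_coord <;> norm_num at h_coord

lemma card_unitVec : Fintype.card (UnitVec d) = 2 * d := by
  rw [Fintype.card_coe, unitVecFinset,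
    card_union_of_disjoint disjoint_image_single_one_image_single_neg_one,
    card_image_of_injective _ (EuclideanSpace.single_left_injective one_ne_zero),
    card_image_of_injective _ (EuclideanSpace.single_left_injective (neg_ne_zero.2 one_ne_zero)),
    card_univ, Fintype.card_fin, two_mul]

lemma sum_unitVecFinset : ∑ x ∈ unitVecFinset d, x = 0 := by
  rw [unitVecFinset, sum_union disjoint_image_single_one_image_single_neg_one,
    sum_image fun _ _ _ _ h => EuclideanSpace.single_left_injective one_ne_zero h,
    sum_image fun _ _ _ _ h =>
      EuclideanSpace.single_left_injective (neg_ne_zero.2 one_ne_zero) h,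
    ← sum_add_distrib]
  refine sum_eq_zero fun i _ => ?_
  rw [← PiLp.single_add, add_neg_cancel, PiLp.single_eq_zero_iff]

lemma sum_univ_erase_unitVec (u : UnitVec d) :
    ∑ w ∈ univ.erase u, (w : EuclideanSpace ℝ (Fin d)) = -u := by
  rw [sum_erase_eq_sub (mem_univ u), sum_coe_sort (unitVecFinset d) fun x => x,
    sum_unitVecFinset, zero_sub]

def pathWeight (d n : ℕ) : ℝ := (2 * (d : ℝ))⁻¹ * ((2 * (d : ℝ) - 1)⁻¹) ^ n

lemma pathWeight_succ (n : ℕ) :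
    pathWeight d (n + 1) = (2 * (d : ℝ) - 1)⁻¹ * pathWeight d n := by
  rw [pathWeight, pathWeight, pow_succ]
  ring

lemma pathWeight_nonneg (hd : 1 ≤ d) (n : ℕ) : 0 ≤ pathWeight d n := by
  have h_base : 0 ≤ 2 * (d : ℝ) - 1 := by
    have : (1 : ℝ) ≤ d := by exact_mod_cast hd
    linarith
  unfold pathWeight
  positivity

lemma card_adjDistinctTuples_mul_pathWeight (hd : 1 ≤ d) (n : ℕ) :
    #(adjDistinctTuples (UnitVec d) n) * pathWeight d n = 1 := by
  have hd' : (1 : ℝ) ≤ d := by exact_mod_cast hd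
  rw [card_adjDistinctTuples, card_unitVec, pathWeight]
  push_cast [Nat.cast_sub (by omega : 1 ≤ 2 * d)]
  rw [mul_mul_mul_comm, ← mul_pow, mul_inv_cancel₀ (by positivity),
    mul_inv_cancel₀ (by linarith), one_pow, one_mul]

end PersistentWalk

namespace DirectionChain

open PersistentWalk

variable {d : ℕ} {Ω : Type} [MeasurableSpace Ω] {μ : Measure Ω} (C : DirectionChain d Ω μ)

@[simp]
lemma norm_D (m : ℕ) (ω : Ω) : ‖C.D m ω‖ = 1 := by
  obtain ⟨i, h | h⟩ := C.D_mem m ω <;> simp [h]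

def path (n : ℕ) (ω : Ω) : Fin (n + 1) → UnitVec d :=
  fun i => ⟨C.D (i + 1) ω, mem_unitVecFinset.2 (C.D_mem _ ω)⟩

lemma measurable_path (n : ℕ) : Measurable (C.path n) :=
  measurable_pi_lambda _ fun _ => (C.measD _).subtype_mk

lemma measureReal_path_preimage_of_mem (hd : 1 ≤ d) {n : ℕ} {p : Fin (n + 1) → UnitVec d}
    (hp : p ∈ adjDistinctTuples (UnitVec d) n) : μ.real (C.path n ⁻¹' {p}) = pathWeight d n := by
  -- `D_path` takes a sequence indexed from `1` with values in `unitVecs` at every index,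
  -- so `p` is extended by constants on both sides.
  set v : ℕ → EuclideanSpace ℝ (Fin d) := fun m => p ⟨min (m - 1) n, by omega⟩
  have hv_succ (i : Fin (n + 1)) : v (i + 1) = p i := by
    simp [v, Nat.le_of_lt_succ i.2]
  have h_cylinder : C.path n ⁻¹' {p} = {ω | ∀ m, 1 ≤ m → m ≤ n + 1 → C.D m ω = v m} := by
    ext ω
    simp only [Set.mem_preimage, Set.mem_singleton_iff, funext_iff, path, Subtype.ext_iff,
      Set.mem_ofPred_eq]
    constructor
    · intro h m hm1 hm2
      obtain ⟨i, rfl⟩ : ∃ i : Fin (n + 1), m = i + 1 := ⟨⟨m - 1, by omega⟩, by simp; omega⟩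
      rw [hv_succ, h]
    · intro h i
      rw [h _ (by omega) (by omega), hv_succ]
  have hv_ne : ∀ m, 1 ≤ m → m + 1 ≤ n + 1 → v (m + 1) ≠ v m := by
    intro m hm1 hm2
    obtain ⟨i, rfl⟩ : ∃ i : Fin n, m = i + 1 := ⟨⟨m - 1, by omega⟩, by simp; omega⟩
    rw [show (i : ℕ) + 1 + 1 = i.succ + 1 from rfl, hv_succ, ← Fin.val_castSucc i, hv_succ]
    exact fun h => (mem_filter.1 hp).2 i (Subtype.ext h)
  rw [measureReal_def, h_cylinder,
    C.D_path (n + 1) n.succ_pos v (fun m => mem_unitVecFinset.1 (p _).2) hv_ne,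
    Nat.add_sub_cancel]
  exact ENNReal.toReal_ofReal (pathWeight_nonneg hd n)

lemma measureReal_path_preimage_of_notMem [IsProbabilityMeasure μ] (hd : 1 ≤ d) {n : ℕ}
    {p : Fin (n + 1) → UnitVec d} (hp : p ∉ adjDistinctTuples (UnitVec d) n) :
    μ.real (C.path n ⁻¹' {p}) = 0 := by
  have h_total : ∑ q, μ.real (C.path n ⁻¹' {q}) = 1 := by
    rw [sum_measureReal_preimage_singleton _
      fun q _ => C.measurable_path n (measurableSet_singleton q), coe_univ, Set.preimage_univ,
      probReal_univ]
  have h_adj : ∑ q ∈ adjDistinctTuples (UnitVec d) n, μ.real (C.path n ⁻¹' {q}) = 1 := by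
    rw [sum_congr rfl fun q hq => C.measureReal_path_preimage_of_mem hd hq, sum_const,
      nsmul_eq_mul, card_adjDistinctTuples_mul_pathWeight hd]
  have h_rest : ∑ q ∈ univ \ adjDistinctTuples (UnitVec d) n, μ.real (C.path n ⁻¹' {q}) = 0 := by
    rw [← sum_sdiff (subset_univ (adjDistinctTuples (UnitVec d) n))] at h_total
    linarith
  exact (sum_eq_zero_iff_of_nonneg fun _ _ => measureReal_nonneg).1 h_rest p
    (mem_sdiff.2 ⟨mem_univ p, hp⟩)

lemma integral_comp_path [IsProbabilityMeasure μ] (hd : 1 ≤ d) (n : ℕ)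
    (F : (Fin (n + 1) → UnitVec d) → ℝ) :
    ∫ ω, F (C.path n ω) ∂μ = pathWeight d n * ∑ p ∈ adjDistinctTuples (UnitVec d) n, F p := by
  rw [← integral_map (C.measurable_path n).aemeasurable
    (measurable_of_countable F).aestronglyMeasurable, integral_fintype .of_finite]
  simp_rw [map_measureReal_apply (C.measurable_path n) (measurableSet_singleton _), smul_eq_mul]
  rw [mul_sum, ← sum_add_sum_compl (adjDistinctTuples (UnitVec d) n),
    sum_eq_zero (s := (adjDistinctTuples (UnitVec d) n)ᶜ) fun p hp => by
      rw [C.measureReal_path_preimage_of_notMem hd (mem_compl.1 hp), zero_mul],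
    add_zero]
  exact sum_congr rfl fun p hp => by rw [C.measureReal_path_preimage_of_mem hd hp]

lemma integral_inner_succ [IsProbabilityMeasure μ] (hd : 1 ≤ d) {m n : ℕ} (hm : 1 ≤ m)
    (hmn : m ≤ n) :
    ∫ ω, inner ℝ (C.D m ω) (C.D (n + 1) ω) ∂μ
      = -(2 * (d : ℝ) - 1)⁻¹ * ∫ ω, inner ℝ (C.D m ω) (C.D n ω) ∂μ := by
  obtain ⟨i, rfl⟩ : ∃ i, m = i + 1 := ⟨m - 1, by omega⟩
  obtain ⟨n, rfl⟩ : ∃ k, n = k + 1 := ⟨n - 1, by omega⟩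
  have h_next := C.integral_comp_path hd (n + 1) fun p =>
    inner ℝ (p ⟨i, by omega⟩ : EuclideanSpace ℝ (Fin d)) (p (Fin.last (n + 1)))
  have h_curr := C.integral_comp_path hd n fun p =>
    inner ℝ (p ⟨i, by omega⟩ : EuclideanSpace ℝ (Fin d)) (p (Fin.last n))
  simp only [path, Fin.val_last] at h_next h_curr
  rw [h_next, h_curr, sum_adjDistinctTuples_succ, pathWeight_succ, mul_assoc, neg_mul,
    ← mul_neg, ← mul_neg, ← sum_neg_distrib]
  congr 2
  refine sum_congr rfl fun q _ => ?_
  have h_init : (⟨i, by omega⟩ : Fin (n + 2)) = Fin.castSucc ⟨i, by omega⟩ := rfl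
  simp only [h_init, Fin.snoc_castSucc, Fin.snoc_last, ← inner_sum, sum_univ_erase_unitVec,
    inner_neg_right]

lemma integral_inner_add [IsProbabilityMeasure μ] (hd : 1 ≤ d) {m : ℕ} (hm : 1 ≤ m) (k : ℕ) :
    ∫ ω, inner ℝ (C.D m ω) (C.D (m + k) ω) ∂μ = (-(2 * (d : ℝ) - 1)⁻¹) ^ k := by
  induction k with
  | zero => simp
  | succ k ih =>
    rw [← add_assoc, C.integral_inner_succ hd hm (by omega), ih, pow_succ, mul_comm]

end DirectionChain

/-- For all `m ≥ 1` and `k ≥ 1`, `E(D_m ⬝ D_{m+k}) = (-1/(2d-1))^k`. -/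
theorem persistent_direction_correlation
    {d : ℕ} (hd : 1 ≤ d) {Ω : Type} [MeasurableSpace Ω] {μ : Measure Ω}
    [IsProbabilityMeasure μ] (C : DirectionChain d Ω μ) :
    ∀ m k : ℕ, 1 ≤ m → 1 ≤ k →
      ∫ ω, (inner ℝ (C.D m ω) (C.D (m + k) ω) : ℝ) ∂μ
        = (-1 / (2 * (d : ℝ) - 1)) ^ k := by
  intro m k hm _
  rw [C.integral_inner_add hd hm k, neg_div, one_div]
end
end

section
/- Assume E(T^2) < ∞. Then lim_{n→∞} (1/n) E( T_{τ^{-1}_n}^2 ) = 0, where T_{τ^{-1}_n} denotes the random variable T_m evaluated at the random index m = τ^{-1}_n. -/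
open MeasureTheory ProbabilityTheory Filter

noncomputable section

/-! For `A ≥ 0` and any index `σ ∈ [1, n]`, pointwise `X_σ ≤ A + ∑_{m ≤ n} X_m 1{X_m > A}`.
For identically distributed `X_m ≥ 0` this gives `E X_σ ≤ A + n E[X_1; X_1 > A]`, hence
`limsup (1/n) E X_σ ≤ E[X_1; X_1 > A]`, which tends to `0` as `A → ∞` since `X_1` is integrable.
Apply this to `X_m = T_m²` and `σ = τ⁻¹_n`, which lies in `[1, n]` because `τ_n ≥ n`. -/

theorem tauInv_mem_Icc {Ω : Type} {T : ℕ → Ω → ℕ} (T_pos : ∀ m ω, 1 ≤ T m ω) {n : ℕ}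
    (hn : 1 ≤ n) (ω : Ω) : tauInv T n ω ∈ Finset.Icc 1 n := by
  have hmem : n ∈ {m : ℕ | 1 ≤ m ∧ n ≤ tauT T m ω} := ⟨hn, self_le_tauT T T_pos n ω⟩
  exact Finset.mem_Icc.2 ⟨(Nat.sInf_mem ⟨n, hmem⟩).1, Nat.sInf_le hmem⟩

namespace ProbabilityTheory

theorem le_add_sub_truncation {α : Type*} (f : α → ℝ) {A : ℝ} (hA : 0 ≤ A) (ω : α) :
    f ω ≤ A + (f ω - truncation f A ω) := by
  have : truncation f A ω ≤ A :=
    (le_abs_self _).trans ((abs_truncation_le_bound f A ω).trans_eq (abs_of_nonneg hA))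
  linarith

theorem sub_truncation_nonneg {α : Type*} {f : α → ℝ} (A : ℝ) {ω : α} (hf : 0 ≤ f ω) :
    0 ≤ f ω - truncation f A ω := by
  have := (le_abs_self _).trans ((abs_truncation_le_abs_self f A ω).trans_eq (abs_of_nonneg hf))
  linarith

variable {Ω : Type*} [MeasurableSpace Ω] {μ : Measure Ω}

theorem integral_comp_index_le [IsProbabilityMeasure μ] {ι : Type*} (s : Finset ι)
    (X : ι → Ω → ℝ) (hX : ∀ m, 0 ≤ X m) (hint : ∀ m ∈ s, Integrable (X m) μ)
    (σ : Ω → ι) (hσ : ∀ ω, σ ω ∈ s) {A : ℝ} (hA : 0 ≤ A) :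
    ∫ ω, X (σ ω) ω ∂μ ≤ A + ∑ m ∈ s, (∫ ω, X m ω ∂μ - ∫ ω, truncation (X m) A ω ∂μ) := by
  have hint_tail : ∀ m ∈ s, Integrable (fun ω => X m ω - truncation (X m) A ω) μ :=
    fun m hm => (hint m hm).sub (hint m hm).aestronglyMeasurable.integrable_truncation
  have hbound : ∀ ω, X (σ ω) ω ≤ A + ∑ m ∈ s, (X m ω - truncation (X m) A ω) := fun ω =>
    (le_add_sub_truncation (X (σ ω)) hA ω).trans <| (add_le_add_iff_left A).2
      (Finset.single_le_sum (f := fun m => X m ω - truncation (X m) A ω)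
        (fun m _ => sub_truncation_nonneg A (hX m ω)) (hσ ω))
  calc ∫ ω, X (σ ω) ω ∂μ
      ≤ ∫ ω, (A + ∑ m ∈ s, (X m ω - truncation (X m) A ω)) ∂μ :=
        integral_mono_of_nonneg (Eventually.of_forall fun ω => hX _ ω)
          ((integrable_const A).add (integrable_finsetSum s hint_tail))
          (Eventually.of_forall hbound)
    _ = A + ∑ m ∈ s, (∫ ω, X m ω ∂μ - ∫ ω, truncation (X m) A ω ∂μ) := by
        rw [integral_add (integrable_const A) (integrable_finsetSum s hint_tail),
          integral_const, integral_finsetSum s hint_tail, probReal_univ, one_smul]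
        refine congrArg (A + ·) (Finset.sum_congr rfl fun m hm => ?_)
        exact integral_sub (hint m hm) (hint m hm).aestronglyMeasurable.integrable_truncation

theorem tendsto_integral_comp_index_div_atTop [IsProbabilityMeasure μ] (X : ℕ → Ω → ℝ)
    (hX : ∀ m, 0 ≤ X m) (hident : ∀ m, 1 ≤ m → IdentDistrib (X m) (X 1) μ μ)
    (hint : Integrable (X 1) μ) (σ : ℕ → Ω → ℕ) (hσ : ∀ n, 1 ≤ n → ∀ ω, σ n ω ∈ Finset.Icc 1 n) :
    Tendsto (fun n : ℕ => (1 / (n : ℝ)) * ∫ ω, X (σ n ω) ω ∂μ) atTop (nhds 0) := by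
  set δ : ℝ → ℝ := fun A => ∫ ω, X 1 ω ∂μ - ∫ ω, truncation (X 1) A ω ∂μ
  have hδ : Tendsto δ atTop (nhds 0) := by
    simpa using (tendsto_integral_truncation hint).const_sub (∫ ω, X 1 ω ∂μ)
  have hbound : ∀ A, 0 ≤ A → ∀ n : ℕ, 1 ≤ n →
      (1 / (n : ℝ)) * ∫ ω, X (σ n ω) ω ∂μ ≤ A / n + δ A := by
    intro A hA n hn
    have htail : ∀ m ∈ Finset.Icc 1 n,
        ∫ ω, X m ω ∂μ - ∫ ω, truncation (X m) A ω ∂μ = δ A := fun m hm => by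
      have hm := hident m (Finset.mem_Icc.1 hm).1
      rw [hm.integral_eq, hm.truncation.integral_eq]
    have key := integral_comp_index_le (Finset.Icc 1 n) X hX
      (fun m hm => (hident m (Finset.mem_Icc.1 hm).1).integrable_iff.2 hint) (σ n) (hσ n hn) hA
    rw [Finset.sum_congr rfl htail, Finset.sum_const, Nat.card_Icc, add_tsub_cancel_right,
      nsmul_eq_mul] at key
    have hn' : (0 : ℝ) < n := by exact_mod_cast hn
    calc (1 / (n : ℝ)) * ∫ ω, X (σ n ω) ω ∂μ ≤ (1 / (n : ℝ)) * (A + n * δ A) := by gcongr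
      _ = A / n + δ A := by field_simp
  refine tendsto_order.2 ⟨fun ε hε => Eventually.of_forall fun n => hε.trans_le ?_,
    fun ε hε => ?_⟩
  · exact mul_nonneg (by positivity) (integral_nonneg fun ω => hX _ ω)
  obtain ⟨A, hA, hδA⟩ :=
    ((eventually_ge_atTop 0).and (hδ.eventually (gt_mem_nhds (half_pos hε)))).exists
  filter_upwards [eventually_ge_atTop 1,
    (tendsto_const_div_atTop_nhds_zero_nat A).eventually (gt_mem_nhds (half_pos hε))] with n hn hAn
  linarith [hbound A hA n hn]

end ProbabilityTheory

theorem stopped_time_square_negligible_general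
    {Ω : Type} [MeasurableSpace Ω] {μ : Measure Ω} [IsProbabilityMeasure μ]
    (T : ℕ → Ω → ℕ)
    (T_pos : ∀ m ω, 1 ≤ T m ω)
    (T_ident : ∀ m : ℕ, IdentDistrib (T (m + 1)) (T 1) μ μ)
    (hT2 : Integrable (fun ω => (T 1 ω : ℝ) ^ 2) μ) :
    Tendsto (fun n : ℕ => (1 / (n : ℝ)) * ∫ ω, (T (tauInv T n ω) ω : ℝ) ^ 2 ∂μ) atTop
      (nhds 0) := by
  refine tendsto_integral_comp_index_div_atTop (fun m ω => (T m ω : ℝ) ^ 2)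
    (fun m ω => sq_nonneg _) (fun m hm => ?_) hT2 (tauInv T) fun n hn => tauInv_mem_Icc T_pos hn
  obtain ⟨k, rfl⟩ := Nat.exists_eq_add_of_le' hm
  exact (T_ident k).comp (measurable_from_top (f := fun x : ℕ => (x : ℝ) ^ 2))

/-- If `E(T²) < ∞`, then `lim_{n→∞} (1/n) E(T_{τ⁻¹_n}²) = 0`. -/
theorem stopped_time_square_negligible
    {Ω : Type} [MeasurableSpace Ω] {μ : Measure Ω} [IsProbabilityMeasure μ]
    (T : ℕ → Ω → ℕ)
    (measT : ∀ m, Measurable (T m))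
    (T_pos : ∀ m ω, 1 ≤ T m ω)
    (T_iid : iIndepFun (fun m : ℕ => T (m + 1)) μ)
    (T_ident : ∀ m : ℕ, IdentDistrib (T (m + 1)) (T 1) μ μ)
    (hT2 : Integrable (fun ω => (T 1 ω : ℝ) ^ 2) μ) :
    Tendsto (fun n : ℕ => (1 / (n : ℝ)) * ∫ ω, (T (tauInv T n ω) ω : ℝ) ^ 2 ∂μ) atTop
      (nhds 0) :=
  stopped_time_square_negligible_general T T_pos T_ident hT2
end
end

section
/- Assume E(T^2) < ∞ and let M^i denote the i-th coordinate of M^p. Then for all i ≠ j in {1,...,d} and all n ≥ 1, E( (M^i_{n+1} − M^i_n)(M^j_{n+1} − M^j_n) | F_n ) = 0 almost surely. -/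
open MeasureTheory ProbabilityTheory Filter

noncomputable section

namespace POI
open Classical

/-! Auxiliary development for `persistent_orthogonal_increments`. -/

def Vfin (d : ℕ) : Finset (EuclideanSpace ℝ (Fin d)) :=
  (Finset.univ.image fun i => EuclideanSpace.single i (1:ℝ)) ∪
  (Finset.univ.image fun i => EuclideanSpace.single i (-1:ℝ))

lemma mem_Vfin {d : ℕ} {v : EuclideanSpace ℝ (Fin d)} : v ∈ Vfin d ↔ v ∈ unitVecs d := by
  simp only [Vfin, Finset.mem_union, Finset.mem_image, Finset.mem_univ, true_and, unitVecs,
    Set.mem_setOf_eq]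
  constructor
  · rintro (⟨i, rfl⟩ | ⟨i, rfl⟩)
    · exact ⟨i, Or.inl rfl⟩
    · exact ⟨i, Or.inr rfl⟩
  · rintro ⟨i, rfl | rfl⟩
    · exact Or.inl ⟨i, rfl⟩
    · exact Or.inr ⟨i, rfl⟩

lemma unit_coord_abs_le {d : ℕ} {v : EuclideanSpace ℝ (Fin d)} (hv : v ∈ unitVecs d)
    (k : Fin d) : |v k| ≤ 1 := by
  obtain ⟨i, rfl | rfl⟩ := hv <;> rw [EuclideanSpace.single_apply] <;> split <;> norm_num

lemma unit_coord_mul {d : ℕ} {i j : Fin d} (hij : i ≠ j) {v : EuclideanSpace ℝ (Fin d)}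
    (hv : v ∈ unitVecs d) : v i * v j = 0 := by
  obtain ⟨k, rfl | rfl⟩ := hv <;> rw [EuclideanSpace.single_apply, EuclideanSpace.single_apply] <;>
    rcases eq_or_ne i k with h | h <;> rcases eq_or_ne j k with h' | h' <;> simp_all

lemma single_eval {d : ℕ} (i : Fin d) (a : ℝ) (k : Fin d) :
    (EuclideanSpace.single i a : EuclideanSpace ℝ (Fin d)) k = if k = i then a else 0 :=
  EuclideanSpace.single_apply i a k

lemma single_one_ne_single_neg {d : ℕ} (i i' : Fin d) :
    EuclideanSpace.single i (1:ℝ) ≠ EuclideanSpace.single i' (-1:ℝ) := by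
  intro h
  have := congrFun (congrArg (fun v : EuclideanSpace ℝ (Fin d) => (v : Fin d → ℝ)) h) i
  simp only [single_eval, if_pos rfl] at this
  rcases eq_or_ne i i' with h' | h'
  · rw [if_pos h'] at this; norm_num at this
  · rw [if_neg h'] at this; norm_num at this

lemma hinj1 {d : ℕ} : Function.Injective fun i : Fin d => EuclideanSpace.single i (1:ℝ) := by
  intro a b h
  by_contra hab
  have := congrFun (congrArg (fun v : EuclideanSpace ℝ (Fin d) => (v : Fin d → ℝ)) h) a
  simp only [single_eval, if_pos rfl, if_neg hab] at this
  norm_num at this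

lemma hinj2 {d : ℕ} : Function.Injective fun i : Fin d => EuclideanSpace.single i (-1:ℝ) := by
  intro a b h
  by_contra hab
  have := congrFun (congrArg (fun v : EuclideanSpace ℝ (Fin d) => (v : Fin d → ℝ)) h) a
  simp only [single_eval, if_pos rfl, if_neg hab] at this
  norm_num at this

lemma hVdisj {d : ℕ} :
    Disjoint (Finset.univ.image fun i : Fin d => EuclideanSpace.single i (1:ℝ))
      (Finset.univ.image fun i : Fin d => EuclideanSpace.single i (-1:ℝ)) := by
  rw [Finset.disjoint_left]
  rintro v hv hv'
  simp only [Finset.mem_image, Finset.mem_univ, true_and] at hv hv'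
  obtain ⟨a, rfl⟩ := hv
  obtain ⟨b, hb⟩ := hv'
  exact single_one_ne_single_neg a b hb.symm

lemma card_Vfin {d : ℕ} : (Vfin d).card = 2 * d := by
  rw [Vfin, Finset.card_union_of_disjoint hVdisj, Finset.card_image_of_injective _ hinj1,
    Finset.card_image_of_injective _ hinj2]
  simp [two_mul]

lemma sum_coord_Vfin {d : ℕ} (k : Fin d) : ∑ w ∈ Vfin d, w k = 0 := by
  rw [Vfin, Finset.sum_union hVdisj, Finset.sum_image (fun a _ b _ h => hinj1 h),
    Finset.sum_image (fun a _ b _ h => hinj2 h)]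
  simp only [single_eval]
  rw [Finset.sum_ite_eq Finset.univ k fun _ => (1:ℝ),
    Finset.sum_ite_eq Finset.univ k fun _ => (-1:ℝ)]
  simp

lemma measE {d : ℕ} (k : Fin d) : Measurable fun v : EuclideanSpace ℝ (Fin d) => v k := by
  measurability

/-- The probability of a fixed admissible direction path of length `n`. -/
def pathP (d n : ℕ) : ENNReal :=
  ENNReal.ofReal ((2 * (d : ℝ))⁻¹ * ((2 * (d : ℝ) - 1)⁻¹) ^ (n - 1))

lemma pathP_succ {d n : ℕ} (hd : 1 ≤ d) (hn : 1 ≤ n) :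
    ((2 * d - 1 : ℕ) : ENNReal) * pathP d (n + 1) = pathP d n := by
  have hd1 : (1:ℝ) ≤ (d:ℝ) := by exact_mod_cast hd
  have h0 : (0:ℝ) < 2 * (d:ℝ) - 1 := by linarith
  have hcast : ((2 * d - 1 : ℕ) : ℝ) = 2 * (d:ℝ) - 1 := by
    rw [Nat.cast_sub (by omega)]
    push_cast
    ring
  rw [pathP, pathP, ← ENNReal.ofReal_natCast, ← ENNReal.ofReal_mul (by positivity)]
  congr 1
  rw [hcast]
  have hn1 : n + 1 - 1 = n := rfl
  have hn2 : n = (n - 1) + 1 := by omega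
  rw [hn1, hn2, pow_succ, ← hn2]
  field_simp

section Walk

variable {d : ℕ} {Ω : Type} [MeasurableSpace Ω] {μ : Measure Ω}

/-- The atom `{ω | D m ω = v m for m = 1, …, n}`. -/
def Datom (D : ℕ → Ω → EuclideanSpace ℝ (Fin d)) (v : ℕ → EuclideanSpace ℝ (Fin d)) (n : ℕ) :
    Set Ω :=
  {ω | ∀ m, 1 ≤ m → m ≤ n → D m ω = v m}

lemma measurableSet_Datom {D : ℕ → Ω → EuclideanSpace ℝ (Fin d)} (measD : ∀ m, Measurable (D m))
    (v : ℕ → EuclideanSpace ℝ (Fin d)) (n : ℕ) : MeasurableSet (Datom D v n) := by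
  have h : Datom D v n = ⋂ m ∈ Finset.Icc 1 n, (D m) ⁻¹' {v m} := by
    ext ω
    simp only [Datom, Set.mem_setOf_eq, Set.mem_iInter, Set.mem_preimage, Set.mem_singleton_iff,
      Finset.mem_Icc]
    exact ⟨fun h m hm => h m hm.1 hm.2, fun h m h1 h2 => h m ⟨h1, h2⟩⟩
  rw [h]
  exact Finset.measurableSet_biInter _ fun m _ => (measD m) (measurableSet_singleton _)

lemma Datom_inter_eq (D : ℕ → Ω → EuclideanSpace ℝ (Fin d)) (v : ℕ → EuclideanSpace ℝ (Fin d))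
    (n : ℕ) (w : EuclideanSpace ℝ (Fin d)) :
    Datom D v n ∩ D (n + 1) ⁻¹' {w} = Datom D (Function.update v (n + 1) w) (n + 1) := by
  ext ω
  simp only [Datom, Set.mem_inter_iff, Set.mem_setOf_eq, Set.mem_preimage, Set.mem_singleton_iff]
  constructor
  · rintro ⟨h1, h2⟩ m hm1 hm2
    rcases Nat.lt_or_ge m (n + 1) with h | h
    · rw [Function.update_of_ne (by omega)]
      exact h1 m hm1 (by omega)
    · have hmeq : m = n + 1 := by omega
      subst hmeq
      rw [Function.update_self]
      exact h2
  · intro h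
    constructor
    · intro m hm1 hm2
      have := h m hm1 (by omega)
      rwa [Function.update_of_ne (by omega)] at this
    · have := h (n + 1) (by omega) le_rfl
      rwa [Function.update_self] at this

lemma partition_meas [IsProbabilityMeasure μ] (Wk : PersistentWalk d Ω μ) {A : Set Ω}
    (hA : MeasurableSet A) (k : ℕ) :
    μ A = ∑ w ∈ Vfin d, μ (A ∩ Wk.D k ⁻¹' {w}) := by
  have hU : A = ⋃ w ∈ Vfin d, (A ∩ Wk.D k ⁻¹' {w}) := by
    ext ω
    simp only [Set.mem_iUnion, Set.mem_inter_iff, Set.mem_preimage, Set.mem_singleton_iff,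
      exists_prop]
    constructor
    · intro hω
      exact ⟨Wk.D k ω, mem_Vfin.mpr (Wk.D_mem k ω), hω, rfl⟩
    · rintro ⟨w, -, hω, -⟩
      exact hω
  conv_lhs => rw [hU]
  refine measure_biUnion_finset ?_ fun w _ => hA.inter (Wk.measD k (measurableSet_singleton _))
  intro w hw w' hw' hne
  simp only [Function.onFun]
  rw [Set.disjoint_left]
  rintro ω ⟨-, hω⟩ ⟨-, hω'⟩
  exact hne (hω.symm.trans hω')

lemma atom_measure_adm [IsProbabilityMeasure μ] (Wk : PersistentWalk d Ω μ)
    {n : ℕ} (hn : 1 ≤ n) {v : ℕ → EuclideanSpace ℝ (Fin d)} (hv : ∀ m, v m ∈ unitVecs d)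
    (hadm : ∀ m, 1 ≤ m → m + 1 ≤ n → v (m + 1) ≠ v m) :
    μ (Datom Wk.D v n) = pathP d n :=
  Wk.D_path n hn v hv hadm

lemma atom_measure_zero [IsProbabilityMeasure μ] (hd : 1 ≤ d) (Wk : PersistentWalk d Ω μ) :
    ∀ n, 1 ≤ n → ∀ v : ℕ → EuclideanSpace ℝ (Fin d), (∀ m, v m ∈ unitVecs d) →
      ¬ (∀ m, 1 ≤ m → m + 1 ≤ n → v (m + 1) ≠ v m) → μ (Datom Wk.D v n) = 0 := by
  intro n hn
  induction n, hn using Nat.le_induction with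
  | base =>
    intro v hv hbad
    exact absurd (fun m h1 h2 => absurd h2 (by omega)) hbad
  | succ n hn ih =>
    intro v hv hbad
    by_cases hadm : ∀ m, 1 ≤ m → m + 1 ≤ n → v (m + 1) ≠ v m
    · -- necessarily `v (n+1) = v n`
      have hvn : v (n + 1) = v n := by
        by_contra hne
        apply hbad
        intro m h1 h2
        rcases Nat.lt_or_ge (m + 1) (n + 1) with h | h
        · exact hadm m h1 (by omega)
        · have hmeq : m = n := by omega
          subst hmeq
          exact hne
      have hvnV : v n ∈ Vfin d := mem_Vfin.mpr (hv n)
      have hAmeas : MeasurableSet (Datom Wk.D v n) := measurableSet_Datom Wk.measD v n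
      have hpart := partition_meas Wk hAmeas (n + 1)
      have hgood : ∀ w ∈ (Vfin d).erase (v n),
          μ (Datom Wk.D v n ∩ Wk.D (n + 1) ⁻¹' {w}) = pathP d (n + 1) := by
        intro w hw
        obtain ⟨hwne, hwV⟩ := Finset.mem_erase.mp hw
        rw [Datom_inter_eq]
        refine atom_measure_adm Wk (by omega) ?_ ?_
        · intro m
          rcases eq_or_ne m (n + 1) with rfl | hm
          · rw [Function.update_self]; exact mem_Vfin.mp hwV
          · rw [Function.update_of_ne hm]; exact hv m
        · intro m h1 h2
          rcases Nat.lt_or_ge (m + 1) (n + 1) with h | h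
          · rw [Function.update_of_ne (by omega), Function.update_of_ne (by omega)]
            exact hadm m h1 (by omega)
          · have hmeq : m = n := by omega
            subst hmeq
            rw [Function.update_self, Function.update_of_ne (by omega)]
            exact hwne
      have hA : μ (Datom Wk.D v n) = pathP d n := atom_measure_adm Wk hn hv hadm
      have key : pathP d n
          = μ (Datom Wk.D v n ∩ Wk.D (n + 1) ⁻¹' {v n})
            + ((2 * d - 1 : ℕ) : ENNReal) * pathP d (n + 1) := by
        rw [← hA, hpart, ← Finset.add_sum_erase _ _ hvnV]
        congr 1
        rw [Finset.sum_congr rfl hgood, Finset.sum_const, Finset.card_erase_of_mem hvnV,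
          card_Vfin, nsmul_eq_mul]
      have hC : ((2 * d - 1 : ℕ) : ENNReal) * pathP d (n + 1) ≠ ⊤ :=
        ENNReal.mul_ne_top (ENNReal.natCast_ne_top _) ENNReal.ofReal_ne_top
      have hbadzero : μ (Datom Wk.D v n ∩ Wk.D (n + 1) ⁻¹' {v n}) = 0 := by
        have key2 : ((2 * d - 1 : ℕ) : ENNReal) * pathP d (n + 1) + 0
            = ((2 * d - 1 : ℕ) : ENNReal) * pathP d (n + 1)
              + μ (Datom Wk.D v n ∩ Wk.D (n + 1) ⁻¹' {v n}) := by
          calc ((2 * d - 1 : ℕ) : ENNReal) * pathP d (n + 1) + 0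
              = ((2 * d - 1 : ℕ) : ENNReal) * pathP d (n + 1) := add_zero _
            _ = pathP d n := pathP_succ hd hn
            _ = μ (Datom Wk.D v n ∩ Wk.D (n + 1) ⁻¹' {v n})
                + ((2 * d - 1 : ℕ) : ENNReal) * pathP d (n + 1) := key
            _ = ((2 * d - 1 : ℕ) : ENNReal) * pathP d (n + 1)
                + μ (Datom Wk.D v n ∩ Wk.D (n + 1) ⁻¹' {v n}) := add_comm _ _
        exact ((ENNReal.add_right_inj hC).mp key2).symm
      have hsub : Datom Wk.D v (n + 1) ⊆ Datom Wk.D v n ∩ Wk.D (n + 1) ⁻¹' {v n} := by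
        intro ω hω
        refine ⟨fun m h1 h2 => hω m h1 (by omega), ?_⟩
        have := hω (n + 1) (by omega) le_rfl
        rw [Set.mem_preimage, Set.mem_singleton_iff, this, hvn]
      exact le_antisymm (le_trans (measure_mono hsub) (le_of_eq hbadzero)) zero_le
    · have hsub : Datom Wk.D v (n + 1) ⊆ Datom Wk.D v n :=
        fun ω hω m h1 h2 => hω m h1 (by omega)
      exact le_antisymm
        (le_trans (measure_mono hsub) (le_of_eq (ih v hv hadm))) zero_le

/-- The key cancellation: sum over the next direction of the symmetrized coordinate
products weighted by the extension probabilities vanishes. -/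
lemma sumA [IsProbabilityMeasure μ] (hd : 1 ≤ d) (Wk : PersistentWalk d Ω μ)
    {i j : Fin d} (hij : i ≠ j) {n : ℕ} (hn : 1 ≤ n)
    (u : ℕ → EuclideanSpace ℝ (Fin d)) (hu : ∀ m, u m ∈ unitVecs d) :
    ∑ w ∈ Vfin d, (w i * u n j + u n i * w j)
        * (μ (Datom Wk.D u n ∩ Wk.D (n + 1) ⁻¹' {w})).toReal = 0 := by
  by_cases hadm : ∀ m, 1 ≤ m → m + 1 ≤ n → u (m + 1) ≠ u m
  · -- admissible case
    have hterm : ∀ w ∈ Vfin d, (w i * u n j + u n i * w j)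
          * (μ (Datom Wk.D u n ∩ Wk.D (n + 1) ⁻¹' {w})).toReal
        = (w i * u n j + u n i * w j) * (pathP d (n + 1)).toReal := by
      intro w hw
      rcases eq_or_ne w (u n) with rfl | hwne
      · rw [unit_coord_mul hij (hu n)]
        simp
      · rw [Datom_inter_eq, atom_measure_adm Wk (by omega)]
        · intro m
          rcases eq_or_ne m (n + 1) with rfl | hm
          · rw [Function.update_self]; exact mem_Vfin.mp hw
          · rw [Function.update_of_ne hm]; exact hu m
        · intro m h1 h2
          rcases Nat.lt_or_ge (m + 1) (n + 1) with h | h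
          · rw [Function.update_of_ne (by omega), Function.update_of_ne (by omega)]
            exact hadm m h1 (by omega)
          · have hmeq : m = n := by omega
            subst hmeq
            rw [Function.update_self, Function.update_of_ne (by omega)]
            exact hwne
    rw [Finset.sum_congr rfl hterm, ← Finset.sum_mul]
    have hsum : ∑ w ∈ Vfin d, (w i * u n j + u n i * w j) = 0 := by
      rw [Finset.sum_add_distrib, ← Finset.sum_mul, ← Finset.mul_sum, sum_coord_Vfin,
        sum_coord_Vfin, zero_mul, mul_zero, add_zero]
    rw [hsum, zero_mul]
  · -- non-admissible case: every cell is null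
    apply Finset.sum_eq_zero
    intro w hw
    have h0 : μ (Datom Wk.D u n ∩ Wk.D (n + 1) ⁻¹' {w}) = 0 := by
      refine le_antisymm (le_trans (measure_mono Set.inter_subset_left) ?_) zero_le
      exact le_of_eq (atom_measure_zero hd Wk n hn u hu hadm)
    rw [h0]
    simp

lemma g_measurable (Wk : PersistentWalk d Ω μ) (i j : Fin d) (n : ℕ) :
    Measurable fun ω =>
      Wk.D (n + 1) ω i * Wk.D n ω j + Wk.D n ω i * Wk.D (n + 1) ω j := by
  have hk : ∀ (m : ℕ) (k : Fin d), Measurable fun ω => Wk.D m ω k :=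
    fun m k => (measE k).comp (Wk.measD m)
  exact ((hk _ i).mul (hk _ j)).add ((hk _ i).mul (hk _ j))

lemma g_bound (Wk : PersistentWalk d Ω μ) (i j : Fin d) (n : ℕ) (ω : Ω) :
    ‖Wk.D (n + 1) ω i * Wk.D n ω j + Wk.D n ω i * Wk.D (n + 1) ω j‖ ≤ 2 := by
  have h1 := unit_coord_abs_le (Wk.D_mem (n + 1) ω) i
  have h2 := unit_coord_abs_le (Wk.D_mem n ω) j
  have h3 := unit_coord_abs_le (Wk.D_mem n ω) i
  have h4 := unit_coord_abs_le (Wk.D_mem (n + 1) ω) j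
  rw [Real.norm_eq_abs]
  have ha : |Wk.D (n + 1) ω i * Wk.D n ω j| ≤ 1 := by
    rw [abs_mul]
    exact mul_le_one₀ h1 (abs_nonneg _) h2
  have hb : |Wk.D n ω i * Wk.D (n + 1) ω j| ≤ 1 := by
    rw [abs_mul]
    exact mul_le_one₀ h3 (abs_nonneg _) h4
  calc |Wk.D (n + 1) ω i * Wk.D n ω j + Wk.D n ω i * Wk.D (n + 1) ω j|
      ≤ |Wk.D (n + 1) ω i * Wk.D n ω j| + |Wk.D n ω i * Wk.D (n + 1) ω j| := abs_add_le _ _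
    _ ≤ 2 := by linarith

lemma g_integrable [IsProbabilityMeasure μ] (Wk : PersistentWalk d Ω μ) (i j : Fin d) (n : ℕ) :
    Integrable (fun ω =>
      Wk.D (n + 1) ω i * Wk.D n ω j + Wk.D n ω i * Wk.D (n + 1) ω j) μ := by
  refine Integrable.mono' (integrable_const (2:ℝ))
    (g_measurable Wk i j n).aestronglyMeasurable ?_
  filter_upwards with ω
  exact g_bound Wk i j n ω

/-- The set integral of the symmetrized product of coordinates of `D_n`, `D_{n+1}` over any
set depending only on `D_1, …, D_n` vanishes. -/
lemma setIntegral_g_zero [IsProbabilityMeasure μ] (hd : 1 ≤ d) (Wk : PersistentWalk d Ω μ)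
    {i j : Fin d} (hij : i ≠ j) {n : ℕ} (hn : 1 ≤ n) {A : Set Ω} (hA : MeasurableSet A)
    (hAdep : ∀ ω ω', (∀ m, 1 ≤ m → m ≤ n → Wk.D m ω = Wk.D m ω') → ω ∈ A → ω' ∈ A) :
    ∫ ω in A, (Wk.D (n + 1) ω i * Wk.D n ω j + Wk.D n ω i * Wk.D (n + 1) ω j) ∂μ = 0 := by
  classical
  set g : Ω → ℝ := fun ω =>
    Wk.D (n + 1) ω i * Wk.D n ω j + Wk.D n ω i * Wk.D (n + 1) ω j with hg
  have he0V : EuclideanSpace.single (⟨0, hd⟩ : Fin d) (1:ℝ) ∈ unitVecs d :=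
    ⟨⟨0, hd⟩, Or.inl rfl⟩
  set uy : (Fin n → EuclideanSpace ℝ (Fin d)) → ℕ → EuclideanSpace ℝ (Fin d) :=
    fun y m => if h : 1 ≤ m ∧ m ≤ n then y ⟨m - 1, by omega⟩
      else EuclideanSpace.single (⟨0, hd⟩ : Fin d) (1:ℝ) with huy
  set Yn := Fintype.piFinset (fun _ : Fin n => Vfin d) with hYn
  have hcellmeas : ∀ y, MeasurableSet (A ∩ Datom Wk.D (uy y) n) :=
    fun y => hA.inter (measurableSet_Datom Wk.measD _ _)
  have hcover : (⋃ y ∈ Yn, (A ∩ Datom Wk.D (uy y) n)) = A := by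
    ext ω
    simp only [Set.mem_iUnion, Set.mem_inter_iff, exists_prop]
    constructor
    · rintro ⟨y, -, hωA, -⟩
      exact hωA
    · intro hωA
      refine ⟨fun m : Fin n => Wk.D (m + 1) ω, ?_, hωA, ?_⟩
      · rw [Fintype.mem_piFinset]
        intro m
        exact mem_Vfin.mpr (Wk.D_mem _ ω)
      · intro m h1 h2
        simp only [huy]
        rw [dif_pos ⟨h1, h2⟩]
        show Wk.D m ω = Wk.D ((m - 1) + 1) ω
        have hmm : m - 1 + 1 = m := by omega
        rw [hmm]
  have hdisj : (↑Yn : Set (Fin n → EuclideanSpace ℝ (Fin d))).Pairwise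
      (Function.onFun Disjoint fun y => A ∩ Datom Wk.D (uy y) n) := by
    intro y hy y' hy' hne
    simp only [Function.onFun]
    rw [Set.disjoint_left]
    rintro ω ⟨-, hω⟩ ⟨-, hω'⟩
    apply hne
    funext m
    have hlt := m.isLt
    have h1 := hω (↑m + 1) (by omega) (by omega)
    have h2 := hω' (↑m + 1) (by omega) (by omega)
    have e1 : ∀ z : Fin n → EuclideanSpace ℝ (Fin d), uy z (↑m + 1) = z m := by
      intro z
      simp only [huy]
      rw [dif_pos ⟨by omega, by omega⟩]
      rfl
    rw [e1 y] at h1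
    rw [e1 y'] at h2
    rw [← h1, ← h2]
  rw [← hcover, integral_biUnion_finset Yn (fun y _ => hcellmeas y) hdisj
    (fun y _ => (g_integrable Wk i j n).integrableOn)]
  apply Finset.sum_eq_zero
  intro y hyY
  have hor : Datom Wk.D (uy y) n ⊆ A ∨ A ∩ Datom Wk.D (uy y) n = ∅ := by
    by_cases hex : ∃ ω₀, ω₀ ∈ A ∩ Datom Wk.D (uy y) n
    · left
      obtain ⟨ω₀, hω₀A, hω₀c⟩ := hex
      intro ω hωc
      exact hAdep ω₀ ω (fun m h1 h2 => by rw [hω₀c m h1 h2, hωc m h1 h2]) hω₀A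
    · right
      exact Set.eq_empty_iff_forall_notMem.mpr fun ω hω => hex ⟨ω, hω⟩
  rcases hor with hor | hor
  · rw [Set.inter_eq_right.mpr hor]
    have hudef : ∀ m, uy y m ∈ unitVecs d := by
      intro m
      simp only [huy]
      split
      · exact mem_Vfin.mp (Fintype.mem_piFinset.mp hyY _)
      · exact he0V
    have hcell2 : Datom Wk.D (uy y) n
        = ⋃ w ∈ Vfin d, (Datom Wk.D (uy y) n ∩ Wk.D (n + 1) ⁻¹' {w}) := by
      ext ω
      simp only [Set.mem_iUnion, Set.mem_inter_iff, Set.mem_preimage, Set.mem_singleton_iff,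
        exists_prop]
      constructor
      · intro hω
        exact ⟨Wk.D (n + 1) ω, mem_Vfin.mpr (Wk.D_mem _ ω), hω, rfl⟩
      · rintro ⟨w, -, hω, -⟩
        exact hω
    have hdisj2 : (↑(Vfin d) : Set (EuclideanSpace ℝ (Fin d))).Pairwise
        (Function.onFun Disjoint fun w => Datom Wk.D (uy y) n ∩ Wk.D (n + 1) ⁻¹' {w}) := by
      intro w hw w' hw' hne
      simp only [Function.onFun]
      rw [Set.disjoint_left]
      rintro ω ⟨-, hω⟩ ⟨-, hω'⟩
      simp only [Set.mem_preimage, Set.mem_singleton_iff] at hω hω'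
      exact hne (hω.symm.trans hω')
    rw [hcell2, integral_biUnion_finset (Vfin d)
      (fun w _ => (measurableSet_Datom Wk.measD _ _).inter
        (Wk.measD (n + 1) (measurableSet_singleton _))) hdisj2
      (fun w _ => (g_integrable Wk i j n).integrableOn)]
    rw [← sumA hd Wk hij hn (uy y) hudef]
    apply Finset.sum_congr rfl
    intro w hw
    have hmeasset : MeasurableSet (Datom Wk.D (uy y) n ∩ Wk.D (n + 1) ⁻¹' {w}) :=
      (measurableSet_Datom Wk.measD _ _).inter (Wk.measD (n + 1) (measurableSet_singleton _))
    have heq : Set.EqOn g (fun _ => w i * uy y n j + uy y n i * w j)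
        (Datom Wk.D (uy y) n ∩ Wk.D (n + 1) ⁻¹' {w}) := by
      rintro ω ⟨hω1, hω2⟩
      simp only [Set.mem_preimage, Set.mem_singleton_iff] at hω2
      simp only [hg]
      rw [hω1 n hn le_rfl, hω2]
    rw [setIntegral_congr_fun hmeasset heq, setIntegral_const, smul_eq_mul, mul_comm, measureReal_def]
  · rw [hor]
    simp

end Walk
end POI

namespace POI
open Classical
section Walk2

variable {d : ℕ} {Ω : Type} [MeasurableSpace Ω] {μ : Measure Ω}

/-- The generating π-system of cylinders for `walkSigma D T n`. -/
def cylinders (Wk : PersistentWalk d Ω μ) (n : ℕ) : Set (Set Ω) :=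
  {s : Set Ω | ∃ S : Finset ℕ, S ⊆ Finset.Icc 1 n ∧ ∃ v : ℕ → EuclideanSpace ℝ (Fin d),
    ∃ t : ℕ → ℕ, s = {ω | ∀ m ∈ S, Wk.D m ω = v m ∧ Wk.T m ω = t m}}

lemma isPiSystem_cylinders (Wk : PersistentWalk d Ω μ) (n : ℕ) :
    IsPiSystem (cylinders Wk n) := by
  classical
  rintro s₁ ⟨S₁, hS₁, v₁, t₁, rfl⟩ s₂ ⟨S₂, hS₂, v₂, t₂, rfl⟩ hne
  obtain ⟨ω₀, h₀₁, h₀₂⟩ := hne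
  refine ⟨S₁ ∪ S₂, Finset.union_subset hS₁ hS₂,
    fun m => if m ∈ S₁ then v₁ m else v₂ m,
    fun m => if m ∈ S₁ then t₁ m else t₂ m, ?_⟩
  ext ω
  simp only [Set.mem_inter_iff, Set.mem_setOf_eq, Finset.mem_union]
  constructor
  · rintro ⟨h1, h2⟩ m hm
    by_cases hm1 : m ∈ S₁
    · rw [if_pos hm1, if_pos hm1]
      exact h1 m hm1
    · rcases hm with hm | hm
      · exact absurd hm hm1
      · rw [if_neg hm1, if_neg hm1]
        exact h2 m hm
  · intro h
    constructor
    · intro m hm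
      have := h m (Or.inl hm)
      rwa [if_pos hm, if_pos hm] at this
    · intro m hm
      by_cases hm1 : m ∈ S₁
      · have hx := h m (Or.inl hm1)
        rw [if_pos hm1, if_pos hm1] at hx
        have ha := h₀₁ m hm1
        have hb := h₀₂ m hm
        exact ⟨by rw [hx.1, ← ha.1, hb.1], by rw [hx.2, ← ha.2, hb.2]⟩
      · have := h m (Or.inr hm)
        rwa [if_neg hm1, if_neg hm1] at this

lemma walkSigma_eq_generateFrom (Wk : PersistentWalk d Ω μ) (n : ℕ) :
    walkSigma Wk.D Wk.T n = MeasurableSpace.generateFrom (cylinders Wk n) := by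
  apply le_antisymm
  · refine iSup_le fun m => iSup_le fun hm => sup_le ?_ ?_
    · rintro s ⟨C, hC, rfl⟩
      have hset : Wk.D m ⁻¹' C = ⋃ w ∈ Vfin d, ⋃ (_ : w ∈ C), ⋃ t : ℕ,
          {ω | ∀ k ∈ ({m} : Finset ℕ), Wk.D k ω = w ∧ Wk.T k ω = t} := by
        ext ω
        simp only [Set.mem_preimage, Set.mem_iUnion, Finset.mem_singleton, exists_prop]
        constructor
        · intro hω
          exact ⟨Wk.D m ω, mem_Vfin.mpr (Wk.D_mem m ω), hω, Wk.T m ω,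
            fun k hk => by subst hk; exact ⟨rfl, rfl⟩⟩
        · rintro ⟨w, -, hwC, t, hset⟩
          obtain ⟨h1, -⟩ := hset m rfl
          rw [h1]
          exact hwC
      rw [hset]
      refine Finset.measurableSet_biUnion _ fun w _ => ?_
      refine MeasurableSet.iUnion fun _ => MeasurableSet.iUnion fun t => ?_
      exact MeasurableSpace.measurableSet_generateFrom
        ⟨{m}, Finset.singleton_subset_iff.mpr hm, fun _ => w, fun _ => t, rfl⟩
    · rintro s ⟨B, hB, rfl⟩
      have hset : Wk.T m ⁻¹' B = ⋃ t : ℕ, ⋃ (_ : t ∈ B), ⋃ w ∈ Vfin d,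
          {ω | ∀ k ∈ ({m} : Finset ℕ), Wk.D k ω = w ∧ Wk.T k ω = t} := by
        ext ω
        simp only [Set.mem_preimage, Set.mem_iUnion, Finset.mem_singleton, exists_prop]
        constructor
        · intro hω
          exact ⟨Wk.T m ω, hω, Wk.D m ω, mem_Vfin.mpr (Wk.D_mem m ω),
            fun k hk => by subst hk; exact ⟨rfl, rfl⟩⟩
        · rintro ⟨t, htB, w, -, hset⟩
          obtain ⟨-, h2⟩ := hset m rfl
          rw [h2]
          exact htB
      rw [hset]
      refine MeasurableSet.iUnion fun t => MeasurableSet.iUnion fun _ => ?_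
      refine Finset.measurableSet_biUnion _ fun w _ => ?_
      exact MeasurableSpace.measurableSet_generateFrom
        ⟨{m}, Finset.singleton_subset_iff.mpr hm, fun _ => w, fun _ => t, rfl⟩
  · apply MeasurableSpace.generateFrom_le
    rintro s ⟨S, hS, v, t, rfl⟩
    have hset : {ω | ∀ m ∈ S, Wk.D m ω = v m ∧ Wk.T m ω = t m}
        = ⋂ m ∈ S, (Wk.D m ⁻¹' {v m} ∩ Wk.T m ⁻¹' {t m}) := by
      ext ω
      simp only [Set.mem_setOf_eq, Set.mem_iInter, Set.mem_inter_iff, Set.mem_preimage,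
        Set.mem_singleton_iff]
    rw [hset]
    refine Finset.measurableSet_biInter _ fun m hm => ?_
    have hmem : m ∈ Finset.Icc 1 n := hS hm
    have hle : (MeasurableSpace.comap (Wk.D m) inferInstance
        ⊔ MeasurableSpace.comap (Wk.T m) inferInstance) ≤ walkSigma Wk.D Wk.T n :=
      le_iSup₂_of_le m hmem le_rfl
    have h1 : MeasurableSet[walkSigma Wk.D Wk.T n] (Wk.D m ⁻¹' {v m}) :=
      (le_trans le_sup_left hle) _ ⟨{v m}, measurableSet_singleton _, rfl⟩
    have h2 : MeasurableSet[walkSigma Wk.D Wk.T n] (Wk.T m ⁻¹' {t m}) :=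
      (le_trans le_sup_right hle) _ ⟨{t m}, measurableSet_singleton _, rfl⟩
    exact h1.inter h2

lemma prod_formula (Wk : PersistentWalk d Ω μ) {i j : Fin d} (hij : i ≠ j) {n : ℕ}
    (hn : 1 ≤ n) (ω : Ω) :
    (Wk.M (n + 1) ω i - Wk.M n ω i) * (Wk.M (n + 1) ω j - Wk.M n ω j)
      = (Wk.D (n + 1) ω i * Wk.D n ω j + Wk.D n ω i * Wk.D (n + 1) ω j)
        * ((Wk.ET / (2 * (d:ℝ))) * ((Wk.T (n + 1) ω : ℝ) - Wk.ET / (2 * (d:ℝ)))) := by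
  have hW : ∀ k : Fin d, Wk.W (n + 1) ω k = Wk.W n ω k + (Wk.T (n + 1) ω : ℝ) * Wk.D (n + 1) ω k := by
    intro k
    have hsum : Wk.W (n + 1) ω = Wk.W n ω + (Wk.T (n + 1) ω : ℝ) • Wk.D (n + 1) ω := by
      simp only [PersistentWalk.W]
      exact Finset.sum_Icc_succ_top (by omega) _
    rw [hsum]
    simp [PiLp.add_apply, PiLp.smul_apply, smul_eq_mul]
  have hM : ∀ (k : Fin d) (m : ℕ),
      Wk.M m ω k = Wk.W m ω k - (Wk.ET / (2 * (d:ℝ))) * Wk.D m ω k := by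
    intro k m
    simp [PersistentWalk.M, PiLp.sub_apply, PiLp.smul_apply, smul_eq_mul]
  have h1 : Wk.D (n + 1) ω i * Wk.D (n + 1) ω j = 0 := unit_coord_mul hij (Wk.D_mem _ ω)
  have h2 : Wk.D n ω i * Wk.D n ω j = 0 := unit_coord_mul hij (Wk.D_mem _ ω)
  rw [hM i (n + 1), hM i n, hM j (n + 1), hM j n, hW i, hW j]
  linear_combination ((Wk.T (n + 1) ω : ℝ) - Wk.ET / (2 * (d:ℝ)))^2 * h1
    + (Wk.ET / (2 * (d:ℝ)))^2 * h2

lemma T_integrable [IsProbabilityMeasure μ] (Wk : PersistentWalk d Ω μ)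
    (hT2 : Integrable (fun ω => (Wk.T 1 ω : ℝ) ^ 2) μ) (m : ℕ) :
    Integrable (fun ω => (Wk.T (m + 1) ω : ℝ)) μ := by
  have hid : IdentDistrib (fun ω => ((Wk.T (m + 1) ω : ℝ)) ^ 2)
      (fun ω => ((Wk.T 1 ω : ℝ)) ^ 2) μ μ :=
    (Wk.T_ident m).comp (u := fun k : ℕ => ((k : ℝ)) ^ 2) measurable_from_top
  have h2 : Integrable (fun ω => ((Wk.T (m + 1) ω : ℝ)) ^ 2) μ := hid.integrable_iff.mpr hT2
  refine h2.mono' ?_ ?_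
  · exact (measurable_from_top.comp (Wk.measT (m + 1))).aestronglyMeasurable
  · filter_upwards with ω
    have h1 : (1:ℝ) ≤ (Wk.T (m + 1) ω : ℝ) := by exact_mod_cast Wk.T_pos (m + 1) ω
    rw [Real.norm_eq_abs, abs_of_nonneg (by positivity)]
    nlinarith

lemma f_integrable [IsProbabilityMeasure μ] (Wk : PersistentWalk d Ω μ)
    (hT2 : Integrable (fun ω => (Wk.T 1 ω : ℝ) ^ 2) μ)
    {i j : Fin d} (hij : i ≠ j) {n : ℕ} (hn : 1 ≤ n) :
    Integrable (fun ω =>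
      (Wk.M (n + 1) ω i - Wk.M n ω i) * (Wk.M (n + 1) ω j - Wk.M n ω j)) μ := by
  have heq : (fun ω => (Wk.M (n + 1) ω i - Wk.M n ω i) * (Wk.M (n + 1) ω j - Wk.M n ω j))
      = fun ω => (Wk.D (n + 1) ω i * Wk.D n ω j + Wk.D n ω i * Wk.D (n + 1) ω j)
        * ((Wk.ET / (2 * (d:ℝ))) * ((Wk.T (n + 1) ω : ℝ) - Wk.ET / (2 * (d:ℝ)))) :=
    funext fun ω => prod_formula Wk hij hn ω
  rw [heq]
  refine Integrable.bdd_mul (c := 2) ?_ (g_measurable Wk i j n).aestronglyMeasurable ?_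
  · exact (((T_integrable Wk hT2 n).sub (integrable_const _)).const_mul _)
  · exact Filter.Eventually.of_forall fun ω => g_bound Wk i j n ω

/-- The value of the set integral of the product of martingale increments over a basic
cylinder set. -/
lemma basic_integral [IsProbabilityMeasure μ] (hd : 1 ≤ d) (Wk : PersistentWalk d Ω μ)
    {i j : Fin d} (hij : i ≠ j) {n : ℕ} (hn : 1 ≤ n)
    (S : Finset ℕ) (hS : S ⊆ Finset.Icc 1 n) (v : ℕ → EuclideanSpace ℝ (Fin d)) (t : ℕ → ℕ) :
    ∫ ω in {ω | ∀ m ∈ S, Wk.D m ω = v m ∧ Wk.T m ω = t m},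
      (Wk.M (n + 1) ω i - Wk.M n ω i) * (Wk.M (n + 1) ω j - Wk.M n ω j) ∂μ = 0 := by
  classical
  set c : ℝ := Wk.ET / (2 * (d:ℝ)) with hc
  set AD : Set Ω := {ω | ∀ m ∈ S, Wk.D m ω = v m} with hAD
  set AT : Set Ω := {ω | ∀ m ∈ S, Wk.T m ω = t m} with hAT
  have hsets : {ω | ∀ m ∈ S, Wk.D m ω = v m ∧ Wk.T m ω = t m} = AD ∩ AT := by
    ext ω
    simp only [Set.mem_setOf_eq, Set.mem_inter_iff, hAD, hAT]
    exact ⟨fun h => ⟨fun m hm => (h m hm).1, fun m hm => (h m hm).2⟩,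
      fun h m hm => ⟨h.1 m hm, h.2 m hm⟩⟩
  have hADmeas : MeasurableSet AD := by
    have h : AD = ⋂ m ∈ S, Wk.D m ⁻¹' {v m} := by
      ext ω
      simp [hAD]
    rw [h]
    exact Finset.measurableSet_biInter _ fun m _ => Wk.measD m (measurableSet_singleton _)
  have hATmeas : MeasurableSet AT := by
    have h : AT = ⋂ m ∈ S, Wk.T m ⁻¹' {t m} := by
      ext ω
      simp [hAT]
    rw [h]
    exact Finset.measurableSet_biInter _ fun m _ => Wk.measT m (measurableSet_singleton _)
  -- functions on path space
  set SD : Set (ℕ → EuclideanSpace ℝ (Fin d)) := {x | ∀ m ∈ S, x m = v m} with hSD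
  set ST : Set (ℕ → ℕ) := {y | ∀ m ∈ S, y m = t m} with hST
  have hSDmeas : MeasurableSet SD := by
    have h : SD = ⋂ m ∈ S, (fun x : ℕ → EuclideanSpace ℝ (Fin d) => x m) ⁻¹' {v m} := by
      ext x
      simp [hSD]
    rw [h]
    exact Finset.measurableSet_biInter _
      fun m _ => (measurable_pi_apply m) (measurableSet_singleton _)
  have hSTmeas : MeasurableSet ST := by
    have h : ST = ⋂ m ∈ S, (fun y : ℕ → ℕ => y m) ⁻¹' {t m} := by
      ext y
      simp [hST]
    rw [h]
    exact Finset.measurableSet_biInter _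
      fun m _ => (measurable_pi_apply m) (measurableSet_singleton _)
  set ΦD : (ℕ → EuclideanSpace ℝ (Fin d)) → ℝ := fun x =>
    SD.indicator (fun _ => (1:ℝ)) x * (x (n + 1) i * x n j + x n i * x (n + 1) j) with hΦD
  set ΦT : (ℕ → ℕ) → ℝ := fun y =>
    ST.indicator (fun _ => (1:ℝ)) y * (c * ((y (n + 1) : ℝ) - c)) with hΦT
  have hΦDmeas : Measurable ΦD := by
    refine Measurable.mul (measurable_const.indicator hSDmeas) ?_
    have hx : ∀ (m : ℕ) (k : Fin d),
        Measurable fun x : ℕ → EuclideanSpace ℝ (Fin d) => x m k :=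
      fun m k => (measE k).comp (measurable_pi_apply m)
    exact ((hx _ i).mul (hx _ j)).add ((hx _ i).mul (hx _ j))
  have hΦTmeas : Measurable ΦT := by
    refine Measurable.mul (measurable_const.indicator hSTmeas) ?_
    exact (measurable_from_top.comp (measurable_pi_apply (n + 1))).sub measurable_const
      |>.const_mul c
  have hDseq : Measurable fun ω (m : ℕ) => Wk.D m ω :=
    measurable_pi_lambda _ fun m => Wk.measD m
  have hTseq : Measurable fun ω (m : ℕ) => Wk.T m ω :=
    measurable_pi_lambda _ fun m => Wk.measT m
  have hindep : IndepFun (ΦD ∘ fun ω (m : ℕ) => Wk.D m ω) (ΦT ∘ fun ω (m : ℕ) => Wk.T m ω) μ :=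
    Wk.DT_indep.comp hΦDmeas hΦTmeas
  have hADmem : ∀ ω, ((fun m : ℕ => Wk.D m ω) ∈ SD) ↔ ω ∈ AD := by
    intro ω
    simp [hSD, hAD]
  have hATmem : ∀ ω, ((fun m : ℕ => Wk.T m ω) ∈ ST) ↔ ω ∈ AT := by
    intro ω
    simp [hST, hAT]
  have hkey : (AD ∩ AT).indicator (fun ω =>
        (Wk.M (n + 1) ω i - Wk.M n ω i) * (Wk.M (n + 1) ω j - Wk.M n ω j))
      = fun ω => (ΦD ∘ fun ω (m : ℕ) => Wk.D m ω) ω * (ΦT ∘ fun ω (m : ℕ) => Wk.T m ω) ω := by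
    funext ω
    simp only [Function.comp_apply, hΦD, hΦT]
    by_cases h1 : ω ∈ AD <;> by_cases h2 : ω ∈ AT
    · rw [Set.indicator_of_mem (Set.mem_inter h1 h2), Set.indicator_of_mem ((hADmem ω).mpr h1),
        Set.indicator_of_mem ((hATmem ω).mpr h2), prod_formula Wk hij hn ω]
      ring
    · rw [Set.indicator_of_notMem (fun hmem => h2 hmem.2),
        Set.indicator_of_notMem (fun hmem => h2 ((hATmem ω).mp hmem))]
      ring
    · rw [Set.indicator_of_notMem (fun hmem => h1 hmem.1),
        Set.indicator_of_notMem (fun hmem => h1 ((hADmem ω).mp hmem))]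
      ring
    · rw [Set.indicator_of_notMem (fun hmem => h1 hmem.1),
        Set.indicator_of_notMem (fun hmem => h1 ((hADmem ω).mp hmem))]
      ring
  rw [hsets, ← integral_indicator (hADmeas.inter hATmeas), hkey]
  have hmul : ∫ ω, (ΦD ∘ fun ω (m : ℕ) => Wk.D m ω) ω * (ΦT ∘ fun ω (m : ℕ) => Wk.T m ω) ω ∂μ
      = (∫ ω, (ΦD ∘ fun ω (m : ℕ) => Wk.D m ω) ω ∂μ)
        * ∫ ω, (ΦT ∘ fun ω (m : ℕ) => Wk.T m ω) ω ∂μ :=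
    hindep.integral_fun_mul_eq_mul_integral (hΦDmeas.comp hDseq).aestronglyMeasurable
      (hΦTmeas.comp hTseq).aestronglyMeasurable
  rw [hmul]
  have hXzero : ∫ ω, (ΦD ∘ fun ω (m : ℕ) => Wk.D m ω) ω ∂μ = 0 := by
    have hrw : (fun ω => (ΦD ∘ fun ω (m : ℕ) => Wk.D m ω) ω)
        = AD.indicator (fun ω =>
            Wk.D (n + 1) ω i * Wk.D n ω j + Wk.D n ω i * Wk.D (n + 1) ω j) := by
      funext ω
      simp only [Function.comp_apply, hΦD]
      by_cases h1 : ω ∈ AD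
      · rw [Set.indicator_of_mem h1, Set.indicator_of_mem ((hADmem ω).mpr h1)]
        ring
      · rw [Set.indicator_of_notMem h1,
          Set.indicator_of_notMem (fun hmem => h1 ((hADmem ω).mp hmem))]
        ring
    rw [hrw, integral_indicator hADmeas]
    refine setIntegral_g_zero hd Wk hij hn hADmeas ?_
    intro ω ω' hDD hω m hm
    have hmIcc := Finset.mem_Icc.mp (hS hm)
    rw [← hDD m hmIcc.1 hmIcc.2]
    exact hω m hm
  rw [hXzero, zero_mul]

end Walk2
end POI

/-- If `E(T²) < ∞`, then for all coordinates `i ≠ j` and all `n ≥ 1`,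
`E((M^i_{n+1} - M^i_n)(M^j_{n+1} - M^j_n) | F_n) = 0` a.s. -/
theorem persistent_orthogonal_increments
    {d : ℕ} (hd : 1 ≤ d) {Ω : Type} [MeasurableSpace Ω] {μ : Measure Ω}
    [IsProbabilityMeasure μ] (Wk : PersistentWalk d Ω μ)
    (hT2 : Integrable (fun ω => (Wk.T 1 ω : ℝ) ^ 2) μ) :
    ∀ i j : Fin d, i ≠ j → ∀ n : ℕ, 1 ≤ n →
      μ[fun ω =>
            (Wk.M (n + 1) ω i - Wk.M n ω i) * (Wk.M (n + 1) ω j - Wk.M n ω j)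
          | walkSigma Wk.D Wk.T n]
        =ᵐ[μ] fun _ => (0 : ℝ) := by
  intro i j hij n hn
  classical
  set f : Ω → ℝ := fun ω =>
    (Wk.M (n + 1) ω i - Wk.M n ω i) * (Wk.M (n + 1) ω j - Wk.M n ω j) with hfdef
  have hm : walkSigma Wk.D Wk.T n ≤ ‹MeasurableSpace Ω› :=
    iSup_le fun m => iSup_le fun _ => sup_le (Wk.measD m).comap_le (Wk.measT m).comap_le
  have hfint : Integrable f μ := POI.f_integrable Wk hT2 hij hn
  have htotal : ∫ ω, f ω ∂μ = 0 := by
    have hb := POI.basic_integral (μ := μ) hd Wk hij hn ∅ (by simp)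
      (fun _ => 0) (fun _ => 0)
    have huniv : {ω : Ω | ∀ m ∈ (∅ : Finset ℕ), Wk.D m ω = 0 ∧ Wk.T m ω = 0} = Set.univ := by
      ext ω
      simp
    rw [huniv, Measure.restrict_univ] at hb
    exact hb
  have hall : ∀ s : Set Ω, MeasurableSet[walkSigma Wk.D Wk.T n] s → ∫ ω in s, f ω ∂μ = 0 := by
    intro s hs
    refine MeasurableSpace.induction_on_inter (m := walkSigma Wk.D Wk.T n)
      (C := fun s _ => ∫ ω in s, f ω ∂μ = 0) (POI.walkSigma_eq_generateFrom Wk n)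
      (POI.isPiSystem_cylinders Wk n) ?_ ?_ ?_ ?_ s hs
    · simp
    · rintro u ⟨S, hS, v, t, rfl⟩
      exact POI.basic_integral hd Wk hij hn S hS v t
    · intro u hu hu0
      have hmeasu : MeasurableSet u := hm _ hu
      have hcompl := integral_add_compl hmeasu hfint
      rw [hu0, zero_add] at hcompl
      rw [hcompl]
      exact htotal
    · intro g hgdisj hgmeas hg0
      rw [integral_iUnion (fun k => hm _ (hgmeas k)) hgdisj hfint.integrableOn]
      simp [hg0]
  have h0 : (fun _ : Ω => (0:ℝ)) =ᵐ[μ] μ[f | walkSigma Wk.D Wk.T n] := by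
    refine ae_eq_condExp_of_forall_setIntegral_eq hm hfint
      (fun s _ _ => (integrable_const (0:ℝ)).integrableOn)
      (fun s hs _ => ?_) ?_
    · rw [hall s hs]
      simp
    · exact aestronglyMeasurable_const
  exact h0.symm
end
end

section
/- Let p := P(T is odd), and if d = 1 assume p < 1. Then for every n ≥ 1, E(|W^r_n|^2) = n·d·p/(d−p) + (p^2·(2d−1)/(2·(d−p)^2))·[ ((2p−1)/(2d−1))^n − 1 ]. -/
open MeasureTheory ProbabilityTheory Filter

noncomputable section

/-- Setup for the reinforced time-changed walk: i.i.d. times `(T_m)_{m ≥ 1}` with values in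
`{1, 2, …}`, step lengths `L_m = 1(T_m odd)`, and directions `(D_m)_{m ≥ 1}` on the `2d` unit
vectors with `D_1` uniform and, conditionally on `(D_m, L_m)`, `D_{m+1}` uniform on the
`2d - 1` unit vectors different from `D_m` if `L_m = 0`, resp. different from `-D_m` if
`L_m = 1`. The joint law of directions and times is specified through the probabilities of
the cylinder events. -/
structure ReinforcedWalk (d : ℕ) (Ω : Type) [MeasurableSpace Ω] (μ : Measure Ω) where
  T : ℕ → Ω → ℕ
  D : ℕ → Ω → EuclideanSpace ℝ (Fin d)
  measT : ∀ m, Measurable (T m)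
  measD : ∀ m, Measurable (D m)
  T_pos : ∀ m ω, 1 ≤ T m ω
  T_iid : iIndepFun (fun m : ℕ => T (m + 1)) μ
  T_ident : ∀ m : ℕ, IdentDistrib (T (m + 1)) (T 1) μ μ
  D_mem : ∀ m ω, D m ω ∈ unitVecs d
  DT_path : ∀ n : ℕ, 1 ≤ n → ∀ (v : ℕ → EuclideanSpace ℝ (Fin d)) (t : ℕ → ℕ),
    (∀ m, v m ∈ unitVecs d) →
    (∀ m, 1 ≤ m → m + 1 ≤ n →
      (if Odd (t m) then v (m + 1) ≠ -v m else v (m + 1) ≠ v m)) →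
    μ {ω | ∀ m, 1 ≤ m → m ≤ n → D m ω = v m ∧ T m ω = t m}
      = ENNReal.ofReal ((2 * (d : ℝ))⁻¹ * ((2 * (d : ℝ) - 1)⁻¹) ^ (n - 1))
        * ∏ m ∈ Finset.Icc 1 n, μ {ω | T 1 ω = t m}

namespace ReinforcedWalk

variable {d : ℕ} {Ω : Type} [MeasurableSpace Ω] {μ : Measure Ω}

/-- The step lengths `L_m = 1(T_m odd)`. -/
def L (Wk : ReinforcedWalk d Ω μ) (m : ℕ) (ω : Ω) : ℕ :=
  if Odd (Wk.T m ω) then 1 else 0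

/-- The reinforced time-changed walk `W^r_n = ∑_{m=1}^n D_m L_m`. -/
def W (Wk : ReinforcedWalk d Ω μ) (n : ℕ) (ω : Ω) : EuclideanSpace ℝ (Fin d) :=
  ∑ m ∈ Finset.Icc 1 n, (Wk.L m ω : ℝ) • Wk.D m ω

/-- The probability `p = P(T is odd)`. -/
def p (Wk : ReinforcedWalk d Ω μ) : ℝ := (μ {ω | Odd (Wk.T 1 ω)}).toReal

/-- The expectation `E(T)` of the generic time. -/
def ET (Wk : ReinforcedWalk d Ω μ) : ℝ := ∫ ω, (Wk.T 1 ω : ℝ) ∂μ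

/-- The diffusion constant `C^r = d p/(d - p)`. -/
def Cr (Wk : ReinforcedWalk d Ω μ) : ℝ := (d : ℝ) * Wk.p / ((d : ℝ) - Wk.p)

/-- The martingale `M^r_n = W^r_n + (p/(2(d-p))) D_n (2 L_n - 1)`. -/
def M (Wk : ReinforcedWalk d Ω μ) (n : ℕ) (ω : Ω) : EuclideanSpace ℝ (Fin d) :=
  Wk.W n ω + (Wk.p / (2 * ((d : ℝ) - Wk.p)) * (2 * (Wk.L n ω : ℝ) - 1)) • Wk.D n ω

/-- The senile reinforced random walk `S^r_n = W^r_{τ⁻¹_n} - D_{τ⁻¹_n} 1(τ_{τ⁻¹_n} - n odd)`. -/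
def S (Wk : ReinforcedWalk d Ω μ) (n : ℕ) (ω : Ω) : EuclideanSpace ℝ (Fin d) :=
  Wk.W (tauInv Wk.T n ω) ω
    - (if Odd (tauT Wk.T (tauInv Wk.T n ω) ω - n) then (1 : ℝ) else 0) • Wk.D (tauInv Wk.T n ω) ω

end ReinforcedWalk

/-! Expand `‖W^r_n‖² = ∑_{m,k ≤ n} L_m L_k ⟨D_m, D_k⟩`. Given the first `k` steps, `D_{k+1}` is
uniform on the `2d - 1` directions other than the blocked one (`-D_k` if `T_k` is odd, `D_k`
otherwise) and `T_{k+1}` is an independent copy of `T`. Summing `⟨D_m, ·⟩` over the allowed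
directions gives `-⟨D_m, blocked⟩`, so with `a_k`, `b_k` the values of `E(L_m ⟨D_m, D_k⟩)`
restricted to `T_k` odd resp. even, `a_{k+1} = p (a_k - b_k)/(2d-1)` and
`b_{k+1} = (1-p)(a_k - b_k)/(2d-1)`. Hence `a_k - b_k = p q^(k-m)` with `q = (2p-1)/(2d-1)`,
`E(L_m L_k ⟨D_m, D_k⟩)` depends only on `|k - m|`, and the double sum is a geometric series.

The law of the walk is only given on admissible cylinders (no step in a blocked direction);
the other cylinders are null because the admissible one-step extensions of an admissible
cylinder already carry all of its mass. -/

open scoped ENNReal RealInnerProductSpace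

lemma sum_Icc_sum_Icc_dist_succ {M : Type*} [AddCommMonoid M] (K : ℕ → M) (n : ℕ) :
    ∑ m ∈ Finset.Icc 1 (n + 1), ∑ k ∈ Finset.Icc 1 (n + 1), K (Nat.dist m k)
      = ∑ m ∈ Finset.Icc 1 n, ∑ k ∈ Finset.Icc 1 n, K (Nat.dist m k) + K 0
        + 2 • ∑ j ∈ Finset.range n, K (j + 1) := by
  have hlast :
      ∑ m ∈ Finset.Icc 1 n, K (Nat.dist m (n + 1)) = ∑ j ∈ Finset.range n, K (j + 1) := by
    refine Finset.sum_nbij' (fun m => n - m) (fun j => n - j) ?_ ?_ ?_ ?_ ?_ <;>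
      intros <;> simp_all [Nat.dist] <;> (try congr 1) <;> omega
  have hlast' :
      ∑ k ∈ Finset.Icc 1 n, K (Nat.dist (n + 1) k) = ∑ j ∈ Finset.range n, K (j + 1) := by
    simpa only [Nat.dist_comm] using hlast
  simp only [Finset.sum_Icc_succ_top (show 1 ≤ n + 1 by omega), Finset.sum_add_distrib, hlast,
    hlast', Nat.dist_self, two_nsmul]
  abel

namespace ReinforcedWalk

section SignedAxes

variable {d : ℕ}

def unitVec (d : ℕ) (e : Fin d × Bool) : EuclideanSpace ℝ (Fin d) :=
  EuclideanSpace.single e.1 (if e.2 then 1 else -1)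

lemma unitVec_injective : Function.Injective (unitVec d) := by
  rintro ⟨i, b⟩ ⟨j, c⟩ h
  have hi := congrArg (· i) h
  by_cases hij : i = j
  · subst hij
    cases b <;> cases c <;> first | rfl | norm_num [unitVec] at hi
  · cases b <;> simp [unitVec, hij] at hi

lemma unitVec_mem (e : Fin d × Bool) : unitVec d e ∈ unitVecs d := by
  rcases e with ⟨i, _ | _⟩
  · exact ⟨i, Or.inr (by simp [unitVec])⟩
  · exact ⟨i, Or.inl (by simp [unitVec])⟩

lemma exists_unitVec_eq {v : EuclideanSpace ℝ (Fin d)} (hv : v ∈ unitVecs d) :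
    ∃ e, unitVec d e = v := by
  rcases hv with ⟨i, rfl | rfl⟩
  exacts [⟨(i, true), by simp [unitVec]⟩, ⟨(i, false), by simp [unitVec]⟩]

lemma norm_unitVec (e : Fin d × Bool) : ‖unitVec d e‖ = 1 := by
  rcases e with ⟨i, _ | _⟩ <;> simp [unitVec]

lemma unitVec_flip (e : Fin d × Bool) : unitVec d (e.1, !e.2) = -unitVec d e := by
  rcases e with ⟨i, _ | _⟩ <;> simp [unitVec, ← PiLp.single_neg]

lemma sum_unitVec : ∑ e : Fin d × Bool, unitVec d e = 0 := by
  refine (Fintype.sum_prod_type _).trans (Finset.sum_eq_zero fun i _ => ?_)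
  simp [unitVec, ← PiLp.single_add]

/-- The direction excluded after a step in direction `z.1` whose time has parity `z.2`
(`true` for odd): the reversal after an odd time, the repetition after an even one. -/
def blocked (z : (Fin d × Bool) × Bool) : Fin d × Bool :=
  if z.2 then (z.1.1, !z.1.2) else z.1

lemma unitVec_blocked (z : (Fin d × Bool) × Bool) :
    unitVec d (blocked z) = if z.2 then -unitVec d z.1 else unitVec d z.1 := by
  unfold blocked
  split_ifs
  exacts [unitVec_flip _, rfl]

def toState (a : (Fin d × Bool) × ℕ) : (Fin d × Bool) × Bool := (a.1, decide (Odd a.2))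

/-- The step sequences to whose cylinders `DT_path` assigns a probability. -/
def IsAdmissible {n : ℕ} (s : Fin n → (Fin d × Bool) × ℕ) : Prop :=
  ∀ i j : Fin n, (j : ℕ) = i + 1 → (s j).1 ≠ blocked (toState (s i))

lemma isAdmissible_fin_one (s : Fin 1 → (Fin d × Bool) × ℕ) : IsAdmissible s := by
  intro i j hij
  omega

lemma IsAdmissible.snoc {n : ℕ} {s : Fin (n + 1) → (Fin d × Bool) × ℕ} (hs : IsAdmissible s)
    {a : (Fin d × Bool) × ℕ} (ha : a.1 ≠ blocked (toState (s (Fin.last n)))) :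
    IsAdmissible (Fin.snoc s a : Fin (n + 2) → (Fin d × Bool) × ℕ) := by
  intro i j hij
  induction j using Fin.lastCases with
  | last =>
    obtain rfl : i = (Fin.last n).castSucc := Fin.ext (by simp at hij ⊢; omega)
    simpa using ha
  | cast j =>
    induction i using Fin.lastCases with
    | last => simp at hij; omega
    | cast i => simpa using hs i j (by simpa using hij)

/-- The conditional probability that the next direction is `x` when `b` is blocked. -/
def nextDirProb (b x : Fin d × Bool) : ℝ≥0∞ :=
  if x = b then 0 else ENNReal.ofReal (2 * (d : ℝ) - 1)⁻¹

lemma sum_nextDirProb (b : Fin d × Bool) : ∑ x, nextDirProb b x = 1 := by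
  have hd : 0 < d := b.1.pos
  rw [← Finset.sum_erase_add _ _ (Finset.mem_univ b)]
  simp only [nextDirProb, ↓reduceIte, add_zero]
  rw [Finset.sum_congr rfl fun x hx => if_neg (Finset.ne_of_mem_erase hx), Finset.sum_const,
    Finset.card_erase_of_mem (Finset.mem_univ b), Finset.card_univ, nsmul_eq_mul,
    ← ENNReal.ofReal_natCast, ← ENNReal.ofReal_mul (Nat.cast_nonneg _)]
  have hcard : ((Fintype.card (Fin d × Bool) - 1 : ℕ) : ℝ) = 2 * d - 1 := by
    rw [Fintype.card_prod, Fintype.card_fin, Fintype.card_bool,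
      Nat.cast_sub (by omega), Nat.cast_mul]
    push_cast
    ring
  have hd' : (1 : ℝ) ≤ d := Nat.one_le_cast.mpr hd
  rw [hcard, mul_inv_cancel₀ (by linarith), ENNReal.ofReal_one]

lemma toReal_nextDirProb (b x : Fin d × Bool) :
    (nextDirProb b x).toReal = if x = b then 0 else (2 * (d : ℝ) - 1)⁻¹ := by
  have hd : (1 : ℝ) ≤ d := Nat.one_le_cast.mpr b.1.pos
  unfold nextDirProb
  split_ifs
  · rfl
  · exact ENNReal.toReal_ofReal (inv_nonneg.mpr (by linarith))

lemma sum_toReal_nextDirProb_mul_inner (v : EuclideanSpace ℝ (Fin d)) (b : Fin d × Bool) :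
    ∑ x, (nextDirProb b x).toReal * ⟪v, unitVec d x⟫
      = -((2 * (d : ℝ) - 1)⁻¹ * ⟪v, unitVec d b⟫) := by
  have hterm (x : Fin d × Bool) : (nextDirProb b x).toReal * ⟪v, unitVec d x⟫
      = (2 * (d : ℝ) - 1)⁻¹ * ⟪v, unitVec d x⟫
        - if x = b then (2 * (d : ℝ) - 1)⁻¹ * ⟪v, unitVec d b⟫ else 0 := by
    rw [toReal_nextDirProb]
    split_ifs with h
    · rw [h]; ring
    · ring
  simp only [hterm, Finset.sum_sub_distrib, ← Finset.mul_sum, ← inner_sum, sum_unitVec,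
    inner_zero_right, mul_zero, Finset.sum_ite_eq', Finset.mem_univ, if_true, zero_sub]

end SignedAxes

section Paths

variable {d : ℕ} {Ω : Type} [MeasurableSpace Ω] {μ : Measure Ω} (Wk : ReinforcedWalk d Ω μ)

def dir (m : ℕ) (ω : Ω) : Fin d × Bool := (exists_unitVec_eq (Wk.D_mem m ω)).choose

lemma unitVec_dir (m : ℕ) (ω : Ω) : unitVec d (Wk.dir m ω) = Wk.D m ω :=
  (exists_unitVec_eq (Wk.D_mem m ω)).choose_spec

lemma dir_eq_iff {m : ℕ} {ω : Ω} {e : Fin d × Bool} :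
    Wk.dir m ω = e ↔ Wk.D m ω = unitVec d e := by
  rw [← unitVec_dir, unitVec_injective.eq_iff]

lemma measurable_dir (m : ℕ) : Measurable (Wk.dir m) :=
  measurable_to_countable' fun e => by
    simpa only [Set.preimage, Set.mem_singleton_iff, dir_eq_iff] using
      Wk.measD m (measurableSet_singleton (unitVec d e))

def state (m : ℕ) (ω : Ω) : (Fin d × Bool) × Bool := (Wk.dir m ω, decide (Odd (Wk.T m ω)))

lemma measurable_state (m : ℕ) : Measurable (Wk.state m) :=
  (Wk.measurable_dir m).prodMk
    ((measurable_from_nat (f := fun t => decide (Odd t))).comp (Wk.measT m))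

def path (n : ℕ) (ω : Ω) : Fin n → (Fin d × Bool) × ℕ :=
  fun i => (Wk.dir (i + 1) ω, Wk.T (i + 1) ω)

lemma measurable_path (n : ℕ) : Measurable (Wk.path n) :=
  measurable_pi_lambda _ fun _ => (Wk.measurable_dir _).prodMk (Wk.measT _)

lemma measurableSet_path_preimage (n : ℕ) (S : Set (Fin n → (Fin d × Bool) × ℕ)) :
    MeasurableSet (Wk.path n ⁻¹' S) :=
  Wk.measurable_path n S.to_countable.measurableSet

lemma path_apply_eq_iff {n : ℕ} {ω : Ω} {i : Fin n} {a : (Fin d × Bool) × ℕ} :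
    Wk.path n ω i = a ↔ Wk.D (i + 1) ω = unitVec d a.1 ∧ Wk.T (i + 1) ω = a.2 :=
  Prod.ext_iff.trans (and_congr_left' (Wk.dir_eq_iff))

lemma path_succ (n : ℕ) (ω : Ω) :
    Wk.path (n + 1) ω = Fin.snoc (Wk.path n ω) (Wk.dir (n + 1) ω, Wk.T (n + 1) ω) := by
  ext i : 1
  induction i using Fin.lastCases <;> simp [path]

lemma path_preimage_snoc_subset {n : ℕ} (s : Fin n → (Fin d × Bool) × ℕ)
    (a : (Fin d × Bool) × ℕ) :
    Wk.path (n + 1) ⁻¹' {Fin.snoc s a} ⊆ Wk.path n ⁻¹' {s} := fun ω hω => by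
  simp only [Set.mem_preimage, Set.mem_singleton_iff, Wk.path_succ, Fin.snoc_inj] at hω ⊢
  exact hω.1

lemma measure_path_preimage_of_isAdmissible {n : ℕ} {s : Fin (n + 1) → (Fin d × Bool) × ℕ}
    (hs : IsAdmissible s) :
    μ (Wk.path (n + 1) ⁻¹' {s})
      = ENNReal.ofReal ((2 * (d : ℝ))⁻¹ * ((2 * (d : ℝ) - 1)⁻¹) ^ n)
        * ∏ i, μ (Wk.T 1 ⁻¹' {(s i).2}) := by
  -- extend `s` to all indices by clamping, as `DT_path` asks for sequences on `ℕ`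
  set a : ℕ → (Fin d × Bool) × ℕ := fun m => s ⟨min (m - 1) n, by omega⟩ with ha
  have ha_succ (i : Fin (n + 1)) : a (i + 1) = s i := by
    simp only [ha, Nat.add_sub_cancel, min_eq_left (Nat.lt_succ_iff.mp i.isLt)]
  have hset : Wk.path (n + 1) ⁻¹' {s}
      = {ω | ∀ m, 1 ≤ m → m ≤ n + 1 →
          Wk.D m ω = unitVec d (a m).1 ∧ Wk.T m ω = (a m).2} := by
    ext ω
    simp only [Set.mem_preimage, Set.mem_singleton_iff, funext_iff, path_apply_eq_iff,
      Set.mem_ofPred_eq]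
    constructor
    · intro h m hm1 hm2
      obtain ⟨i, rfl⟩ : ∃ i : Fin (n + 1), m = i + 1 :=
        ⟨⟨m - 1, by omega⟩, by simp; omega⟩
      rw [ha_succ]
      exact h i
    · intro h i
      rw [← ha_succ]
      exact h (i + 1) (by omega) (by omega)
  have hvalid : ∀ m, 1 ≤ m → m + 1 ≤ n + 1 →
      if Odd (a m).2 then unitVec d (a (m + 1)).1 ≠ -unitVec d (a m).1
      else unitVec d (a (m + 1)).1 ≠ unitVec d (a m).1 := by
    intro m hm1 hm2
    have key := hs ⟨m - 1, by omega⟩ ⟨m, by omega⟩ (by simp; omega)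
    have e1 : a m = s ⟨m - 1, by omega⟩ := by simp only [ha]; congr; omega
    have e2 : a (m + 1) = s ⟨m, by omega⟩ := by simp only [ha]; congr; omega
    rw [e1, e2]
    rw [ne_eq, ← unitVec_injective.eq_iff, unitVec_blocked] at key
    simpa [toState, apply_ite] using key
  rw [hset, Wk.DT_path (n + 1) (by omega) _ _ (fun _ => unitVec_mem _) hvalid,
    Nat.add_sub_cancel]
  congr 1
  calc ∏ m ∈ Finset.Icc 1 (n + 1), μ {ω | Wk.T 1 ω = (a m).2}
      = ∏ i : Fin (n + 1), μ {ω | Wk.T 1 ω = (a (i + 1)).2} := by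
        rw [Fin.prod_univ_eq_prod_range (fun i => μ {ω | Wk.T 1 ω = (a (i + 1)).2}),
          Finset.range_eq_Ico, Finset.prod_Ico_add' (fun m => μ {ω | Wk.T 1 ω = (a m).2})]
        rfl
    _ = _ := by simp only [ha_succ]; rfl

lemma measure_path_snoc_of_isAdmissible {n : ℕ} {s : Fin (n + 1) → (Fin d × Bool) × ℕ}
    (hs : IsAdmissible s) {a : (Fin d × Bool) × ℕ}
    (ha : a.1 ≠ blocked (toState (s (Fin.last n)))) :
    μ (Wk.path (n + 2) ⁻¹' {Fin.snoc s a})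
      = nextDirProb (blocked (toState (s (Fin.last n)))) a.1 * μ (Wk.T 1 ⁻¹' {a.2})
        * μ (Wk.path (n + 1) ⁻¹' {s}) := by
  have hd : (1 : ℝ) ≤ d := Nat.one_le_cast.mpr a.1.1.pos
  rw [nextDirProb, if_neg ha, Wk.measure_path_preimage_of_isAdmissible (hs.snoc ha),
    Wk.measure_path_preimage_of_isAdmissible hs, Fin.prod_univ_castSucc]
  simp only [Fin.snoc_castSucc, Fin.snoc_last]
  have hc : 0 ≤ (2 * (d : ℝ) - 1)⁻¹ := inv_nonneg.mpr (by linarith)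
  rw [pow_succ, ← mul_assoc (2 * (d : ℝ))⁻¹,
    ENNReal.ofReal_mul (mul_nonneg (by positivity) (pow_nonneg hc n))]
  ring

lemma measure_path_eq_tsum_snoc {n : ℕ} (s : Fin n → (Fin d × Bool) × ℕ) :
    μ (Wk.path n ⁻¹' {s}) = ∑' a, μ (Wk.path (n + 1) ⁻¹' {Fin.snoc s a}) := by
  have hfib (a : (Fin d × Bool) × ℕ) : Wk.path (n + 1) ⁻¹' {Fin.snoc s a}
      = Wk.path n ⁻¹' {s} ∩ (fun ω => (Wk.dir (n + 1) ω, Wk.T (n + 1) ω)) ⁻¹' {a} := by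
    ext ω
    simp [Wk.path_succ]
  simp only [hfib]
  rw [← measure_iUnion, ← Set.inter_iUnion, ← Set.preimage_iUnion,
    Set.iUnion_singleton_eq_range, Set.range_id', Set.preimage_univ, Set.inter_univ]
  · exact fun a a' h => ((pairwise_disjoint_fiber _ h).inter_left' _).inter_right' _
  · exact fun a => (Wk.measurableSet_path_preimage n _).inter
      (((Wk.measurable_dir _).prodMk (Wk.measT _)) (measurableSet_singleton a))

variable [IsProbabilityMeasure μ]

lemma tsum_measure_T_preimage_singleton : ∑' t, μ (Wk.T 1 ⁻¹' {t}) = 1 := by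
  rw [← measure_iUnion (pairwise_disjoint_fiber _)
      fun t => Wk.measT 1 (measurableSet_singleton t),
    ← Set.preimage_iUnion, Set.iUnion_singleton_eq_range, Set.range_id', Set.preimage_univ,
    measure_univ]

/-- Taking the blocked direction is a null event: the unblocked extensions of an admissible
sequence already carry its whole mass. -/
lemma measure_path_snoc_blocked {n : ℕ}
    {s : Fin (n + 1) → (Fin d × Bool) × ℕ} (hs : IsAdmissible s) (t : ℕ) :
    μ (Wk.path (n + 2) ⁻¹' {Fin.snoc s (blocked (toState (s (Fin.last n))), t)}) = 0 := by
  set b := blocked (toState (s (Fin.last n)))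
  set bad : ℕ → ℝ≥0∞ := fun t => μ (Wk.path (n + 2) ⁻¹' {Fin.snoc s (b, t)})
  have hext (x : Fin d × Bool) (t : ℕ) : μ (Wk.path (n + 2) ⁻¹' {Fin.snoc s (x, t)})
      = nextDirProb b x * μ (Wk.T 1 ⁻¹' {t}) * μ (Wk.path (n + 1) ⁻¹' {s})
        + if x = b then bad t else 0 := by
    by_cases hx : x = b
    · subst hx
      simp [nextDirProb, bad]
    · rw [Wk.measure_path_snoc_of_isAdmissible hs hx, if_neg hx, add_zero]
  have hmass :
      μ (Wk.path (n + 1) ⁻¹' {s}) + 0 = μ (Wk.path (n + 1) ⁻¹' {s}) + ∑' t, bad t := by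
    conv_lhs => rw [add_zero, Wk.measure_path_eq_tsum_snoc, ENNReal.tsum_prod', ENNReal.tsum_comm]
    simp only [tsum_fintype, hext, Finset.sum_add_distrib, ← Finset.sum_mul, sum_nextDirProb,
      one_mul, Finset.sum_ite_eq', Finset.mem_univ, if_true]
    rw [ENNReal.tsum_add, ENNReal.tsum_mul_right, Wk.tsum_measure_T_preimage_singleton, one_mul]
  exact ENNReal.tsum_eq_zero.mp ((ENNReal.add_right_inj (measure_ne_top _ _)).mp hmass).symm t

lemma measure_path_of_not_isAdmissible {n : ℕ}
    {s : Fin (n + 1) → (Fin d × Bool) × ℕ} (hs : ¬IsAdmissible s) :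
    μ (Wk.path (n + 1) ⁻¹' {s}) = 0 := by
  induction n with
  | zero => exact absurd (isAdmissible_fin_one s) hs
  | succ n ih =>
    rw [← Fin.snoc_init_self s] at hs ⊢
    by_cases hinit : IsAdmissible (Fin.init s)
    · by_cases hlast : (s (Fin.last _)).1 = blocked (toState (Fin.init s (Fin.last n)))
      · rw [show s (Fin.last _) = (_, (s (Fin.last _)).2) from Prod.ext hlast rfl]
        exact Wk.measure_path_snoc_blocked hinit _
      · exact absurd (hinit.snoc hlast) hs
    · exact measure_mono_null (Wk.path_preimage_snoc_subset _ _) (ih hinit)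

lemma measure_path_snoc {n : ℕ} (s : Fin (n + 1) → (Fin d × Bool) × ℕ)
    (a : (Fin d × Bool) × ℕ) :
    μ (Wk.path (n + 2) ⁻¹' {Fin.snoc s a})
      = nextDirProb (blocked (toState (s (Fin.last n)))) a.1 * μ (Wk.T 1 ⁻¹' {a.2})
        * μ (Wk.path (n + 1) ⁻¹' {s}) := by
  by_cases hs : IsAdmissible s
  · by_cases ha : a.1 = blocked (toState (s (Fin.last n)))
    · obtain ⟨x, t⟩ := a
      obtain rfl : x = _ := ha
      rw [Wk.measure_path_snoc_blocked hs, nextDirProb, if_pos rfl, zero_mul, zero_mul]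
    · exact Wk.measure_path_snoc_of_isAdmissible hs ha
  · rw [Wk.measure_path_of_not_isAdmissible hs, mul_zero]
    exact measure_mono_null (Wk.path_preimage_snoc_subset s a)
      (Wk.measure_path_of_not_isAdmissible hs)

lemma measure_path_preimage_inter_step {n : ℕ} {S : Set (Fin (n + 1) → (Fin d × Bool) × ℕ)}
    {b : Fin d × Bool} (hS : ∀ s ∈ S, blocked (toState (s (Fin.last n))) = b)
    (x : Fin d × Bool) (R : Set ℕ) :
    μ (Wk.path (n + 1) ⁻¹' S ∩ {ω | Wk.dir (n + 2) ω = x ∧ Wk.T (n + 2) ω ∈ R})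
      = nextDirProb b x * μ (Wk.T 1 ⁻¹' R) * μ (Wk.path (n + 1) ⁻¹' S) := by
  set E := {ω | Wk.dir (n + 2) ω = x ∧ Wk.T (n + 2) ω ∈ R}
  have hfiber : ∀ s ∈ S, μ (Wk.path (n + 1) ⁻¹' {s} ∩ E)
      = nextDirProb b x * μ (Wk.T 1 ⁻¹' R) * μ (Wk.path (n + 1) ⁻¹' {s}) := by
    intro s hs
    have hset : Wk.path (n + 1) ⁻¹' {s} ∩ E
        = ⋃ t ∈ R, Wk.path (n + 2) ⁻¹' {Fin.snoc s (x, t)} := by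
      ext ω
      simp only [Set.mem_inter_iff, Set.mem_preimage, Set.mem_singleton_iff, Set.mem_iUnion,
        Wk.path_succ (n + 1), Fin.snoc_inj, Prod.mk.injEq, exists_prop, E, Set.mem_ofPred_eq]
      constructor
      · rintro ⟨hs, hx, hR⟩
        exact ⟨_, hR, hs, hx, rfl⟩
      · rintro ⟨t, hR, hs, hx, rfl⟩
        exact ⟨hs, hx, hR⟩
    rw [hset, measure_biUnion R.to_countable, ← tsum_measure_preimage_singleton R.to_countable
        fun t _ => Wk.measT 1 (measurableSet_singleton t), ← ENNReal.tsum_mul_left,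
      ← ENNReal.tsum_mul_right]
    · simp only [Wk.measure_path_snoc, hS s hs]
    · intro t _ t' _ htt'
      exact pairwise_disjoint_fiber _ (by simpa using htt')
    · exact fun t _ => Wk.measurableSet_path_preimage _ _
  have hset : Wk.path (n + 1) ⁻¹' S ∩ E = ⋃ s ∈ S, Wk.path (n + 1) ⁻¹' {s} ∩ E := by
    rw [← Set.iUnion₂_inter, Set.biUnion_preimage_singleton]
  rw [hset, measure_biUnion S.to_countable, ← tsum_measure_preimage_singleton S.to_countable
      fun s _ => Wk.measurableSet_path_preimage _ _, ← ENNReal.tsum_mul_left]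
  · exact tsum_congr fun s => hfiber s s.2
  · exact (Set.pairwiseDisjoint_fiber _ _).mono fun s => Set.inter_subset_left
  · exact fun s _ => (Wk.measurableSet_path_preimage _ _).inter
      ((Wk.measurable_dir _ (measurableSet_singleton x)).inter (Wk.measT _ trivial))

lemma measure_state_inter_state_succ {m k : ℕ} (hm : 1 ≤ m) (hmk : m ≤ k)
    (y x : (Fin d × Bool) × Bool) :
    μ (Wk.state m ⁻¹' {y} ∩ Wk.state (k + 1) ⁻¹' {x})
      = ∑ z, nextDirProb (blocked z) x.1 * μ (Wk.T 1 ⁻¹' {t | decide (Odd t) = x.2})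
          * μ (Wk.state m ⁻¹' {y} ∩ Wk.state k ⁻¹' {z}) := by
  obtain ⟨n, rfl⟩ : ∃ n, k = n + 1 := ⟨k - 1, by omega⟩
  have hpath (z : (Fin d × Bool) × Bool) : Wk.state m ⁻¹' {y} ∩ Wk.state (n + 1) ⁻¹' {z}
      = Wk.path (n + 1) ⁻¹'
          {s | toState (s ⟨m - 1, by omega⟩) = y ∧ toState (s (Fin.last n)) = z} := by
    ext ω
    simp only [Set.mem_inter_iff, Set.mem_preimage, Set.mem_singleton_iff, Set.mem_ofPred_eq,
      path, toState, Fin.val_last, Nat.sub_add_cancel hm]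
    rfl
  have hnext : Wk.state (n + 2) ⁻¹' {x}
      = {ω | Wk.dir (n + 2) ω = x.1 ∧ Wk.T (n + 2) ω ∈ {t | decide (Odd t) = x.2}} := by
    ext ω
    simp [state, Prod.ext_iff]
  have hsplit : Wk.state m ⁻¹' {y} ∩ Wk.state (n + 2) ⁻¹' {x}
      = ⋃ z ∈ (Finset.univ : Finset _), Wk.state m ⁻¹' {y} ∩ Wk.state (n + 1) ⁻¹' {z}
          ∩ Wk.state (n + 2) ⁻¹' {x} := by
    ext ω
    simp
  rw [hsplit, measure_biUnion_finset]
  · refine Finset.sum_congr rfl fun z _ => ?_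
    rw [hpath, hnext, Wk.measure_path_preimage_inter_step fun s hs => by rw [hs.2]]
  · exact fun z _ z' _ h =>
      (pairwise_disjoint_fiber (Wk.state (n + 1)) h).mono (fun _ hω => hω.1.2)
        (fun _ hω => hω.1.2)
  · exact fun z _ => ((Wk.measurable_state m (measurableSet_singleton y)).inter
      (Wk.measurable_state _ (measurableSet_singleton z))).inter
      (Wk.measurable_state _ (measurableSet_singleton x))

end Paths

/-- `E(L_m L_k ⟨D_m, D_k⟩)` as a function of the lag `|k - m|`, in dimension `D`. -/
def lagCorr (D p : ℝ) : ℕ → ℝ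
  | 0 => p
  | j + 1 => p ^ 2 * (2 * D - 1)⁻¹ * ((2 * p - 1) / (2 * D - 1)) ^ j

lemma sum_lagCorr_dist {D p : ℝ} (hD : 1 ≤ D) (hpD : p < D) (n : ℕ) :
    ∑ m ∈ Finset.Icc 1 n, ∑ k ∈ Finset.Icc 1 n, lagCorr D p (Nat.dist m k)
      = n * (D * p / (D - p))
        + (p ^ 2 * (2 * D - 1) / (2 * (D - p) ^ 2)) * (((2 * p - 1) / (2 * D - 1)) ^ n - 1) := by
  set q := (2 * p - 1) / (2 * D - 1)
  set A := p ^ 2 * (2 * D - 1) / (2 * (D - p) ^ 2)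
  have h2D : 2 * D - 1 ≠ 0 := by linarith
  have hDp : D - p ≠ 0 := by linarith
  have hq : q - 1 = -(2 * (D - p) / (2 * D - 1)) := by
    simp only [q]
    field_simp
    ring
  have hA : A * (q - 1) = -(p ^ 2 / (D - p)) := by
    rw [hq, mul_neg]
    simp only [A]
    field_simp
  have hA₁ : D * p / (D - p) + A * (q - 1) = p := by
    rw [hA]
    field_simp
    ring
  have hA₂ : A * (q - 1) ^ 2 = 2 * (p ^ 2 * (2 * D - 1)⁻¹) := by
    rw [sq, ← mul_assoc, hA, hq]
    field_simp
  induction n with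
  | zero => simp
  | succ n ih =>
    rw [sum_Icc_sum_Icc_dist_succ, ih]
    simp only [lagCorr, ← Finset.mul_sum, nsmul_eq_mul]
    push_cast
    -- the increment `p + 2 p² (2D-1)⁻¹ ∑_{j<n} q^j` equals `D p/(D-p) + A (q^(n+1) - q^n)`
    linear_combination (-1 : ℝ) * hA₁ + (A * (q - 1)) * geom_sum_mul q n
      - (∑ j ∈ Finset.range n, q ^ j) * hA₂

section Correlations

def stateInner {d : ℕ} (yz : ((Fin d × Bool) × Bool) × ((Fin d × Bool) × Bool)) : ℝ :=
  ⟪(if yz.1.2 then (1 : ℝ) else 0) • unitVec d yz.1.1,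
    (if yz.2.2 then (1 : ℝ) else 0) • unitVec d yz.2.1⟫

variable {d : ℕ} {Ω : Type} [MeasurableSpace Ω] {μ : Measure Ω} (Wk : ReinforcedWalk d Ω μ)

/-- `E(L_m ⟨D_m, D_k⟩; T_k has parity ε)`, written over the joint law of the states. -/
def corr (m k : ℕ) (ε : Bool) : ℝ :=
  ∑ u, ∑ x, ⟪unitVec d u, unitVec d x⟫
    * μ.real (Wk.state m ⁻¹' {(u, true)} ∩ Wk.state k ⁻¹' {(x, ε)})

lemma measureReal_T_odd {m : ℕ} (hm : 1 ≤ m) : μ.real {ω | Odd (Wk.T m ω)} = Wk.p := by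
  obtain ⟨m, rfl⟩ : ∃ m', m = m' + 1 := ⟨m - 1, by omega⟩
  exact congrArg ENNReal.toReal ((Wk.T_ident m).measure_mem_eq (s := {t | Odd t}) trivial)

lemma inner_smul_D_eq (m k : ℕ) (ω : Ω) :
    ⟪(Wk.L m ω : ℝ) • Wk.D m ω, (Wk.L k ω : ℝ) • Wk.D k ω⟫
      = stateInner (Wk.state m ω, Wk.state k ω) := by
  by_cases hm : Odd (Wk.T m ω) <;> by_cases hk : Odd (Wk.T k ω) <;>
    simp [stateInner, state, L, unitVec_dir, hm, hk]

lemma measurable_state_prod (m k : ℕ) : Measurable fun ω => (Wk.state m ω, Wk.state k ω) :=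
  (Wk.measurable_state m).prodMk (Wk.measurable_state k)

lemma norm_W_sq (n : ℕ) (ω : Ω) :
    ‖Wk.W n ω‖ ^ 2 = ∑ m ∈ Finset.Icc 1 n, ∑ k ∈ Finset.Icc 1 n,
      ⟪(Wk.L m ω : ℝ) • Wk.D m ω, (Wk.L k ω : ℝ) • Wk.D k ω⟫ := by
  simp only [← real_inner_self_eq_norm_sq, W, sum_inner, inner_sum]
  exact Finset.sum_comm

variable [IsProbabilityMeasure μ]

lemma measureReal_T_parity (ε : Bool) :
    μ.real (Wk.T 1 ⁻¹' {t | decide (Odd t) = ε}) = if ε then Wk.p else 1 - Wk.p := by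
  cases ε
  · have hcompl : Wk.T 1 ⁻¹' {t | decide (Odd t) = false} = {ω | Odd (Wk.T 1 ω)}ᶜ := by
      ext; simp
    rw [hcompl, measureReal_compl (s := {ω | Odd (Wk.T 1 ω)})
        (Wk.measT 1 (show MeasurableSet {t : ℕ | Odd t} from trivial)),
      probReal_univ, Wk.measureReal_T_odd le_rfl, if_neg Bool.false_ne_true]
  · simpa using Wk.measureReal_T_odd le_rfl

lemma measureReal_state_inter_state_succ {m k : ℕ} (hm : 1 ≤ m) (hmk : m ≤ k)
    (y x : (Fin d × Bool) × Bool) :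
    μ.real (Wk.state m ⁻¹' {y} ∩ Wk.state (k + 1) ⁻¹' {x})
      = ∑ z, (nextDirProb (blocked z) x.1).toReal
          * μ.real (Wk.T 1 ⁻¹' {t | decide (Odd t) = x.2})
          * μ.real (Wk.state m ⁻¹' {y} ∩ Wk.state k ⁻¹' {z}) := by
  rw [measureReal_def, Wk.measure_state_inter_state_succ hm hmk, ENNReal.toReal_sum]
  · simp only [ENNReal.toReal_mul, measureReal_def]
  · intro z _
    refine ENNReal.mul_ne_top (ENNReal.mul_ne_top ?_ (measure_ne_top _ _)) (measure_ne_top _ _)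
    unfold nextDirProb
    split_ifs <;> simp

lemma corr_succ {m k : ℕ} (hm : 1 ≤ m) (hmk : m ≤ k) (ε : Bool) :
    Wk.corr m (k + 1) ε
      = μ.real (Wk.T 1 ⁻¹' {t | decide (Odd t) = ε}) * (2 * (d : ℝ) - 1)⁻¹
        * (Wk.corr m k true - Wk.corr m k false) := by
  set w := μ.real (Wk.T 1 ⁻¹' {t | decide (Odd t) = ε})
  set J := fun u z => μ.real (Wk.state m ⁻¹' {(u, true)} ∩ Wk.state k ⁻¹' {z})
  have hu (u : Fin d × Bool) :
      ∑ x, ⟪unitVec d u, unitVec d x⟫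
          * μ.real (Wk.state m ⁻¹' {(u, true)} ∩ Wk.state (k + 1) ⁻¹' {(x, ε)})
        = w * (2 * (d : ℝ) - 1)⁻¹ * ∑ z : Fin d × Bool,
            (⟪unitVec d u, unitVec d z⟫ * J u (z, true)
              - ⟪unitVec d u, unitVec d z⟫ * J u (z, false)) := by
    calc _ = ∑ z, w * J u z
          * ∑ x, (nextDirProb (blocked z) x).toReal * ⟪unitVec d u, unitVec d x⟫ := by
          simp only [Wk.measureReal_state_inter_state_succ hm hmk, Finset.mul_sum]
          rw [Finset.sum_comm]
          refine Finset.sum_congr rfl fun z _ => Finset.sum_congr rfl fun x _ => ?_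
          ring
      _ = _ := by
          simp only [sum_toReal_nextDirProb_mul_inner, unitVec_blocked]
          simp only [Fintype.sum_prod_type, Fintype.sum_bool, Finset.mul_sum]
          refine Finset.sum_congr rfl fun z _ => ?_
          simp only [if_true, Bool.false_eq_true, if_false, inner_neg_right]
          ring
  simp only [corr, hu, ← Finset.mul_sum, Finset.sum_sub_distrib, J]

lemma corr_self {m : ℕ} (hm : 1 ≤ m) (ε : Bool) : Wk.corr m m ε = if ε then Wk.p else 0 := by
  have hJ (u x : Fin d × Bool) :
      μ.real (Wk.state m ⁻¹' {(u, true)} ∩ Wk.state m ⁻¹' {(x, ε)})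
        = if x = u ∧ ε = true then μ.real (Wk.state m ⁻¹' {(u, true)}) else 0 := by
    split_ifs with h
    · rw [h.1, h.2, Set.inter_self]
    · rw [(pairwise_disjoint_fiber _ (by aesop)).inter_eq, measureReal_empty]
  have hodd : ∑ u, μ.real (Wk.state m ⁻¹' {(u, true)}) = Wk.p := by
    rw [← Wk.measureReal_T_odd hm]
    convert sum_measureReal_preimage_singleton (μ := μ) (Finset.univ ×ˢ {true})
      (fun z _ => Wk.measurable_state m (measurableSet_singleton z)) using 1
    · rw [Finset.sum_product]
      simp
    · congr 1
      ext ω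
      simp [state]
  cases ε <;> simp [corr, hJ, norm_unitVec, hodd]

lemma corr_true_sub_false {m : ℕ} (hm : 1 ≤ m) (j : ℕ) :
    Wk.corr m (m + j) true - Wk.corr m (m + j) false
      = Wk.p * ((2 * Wk.p - 1) / (2 * (d : ℝ) - 1)) ^ j := by
  induction j with
  | zero => simp [Wk.corr_self hm]
  | succ j ih =>
    rw [← add_assoc, Wk.corr_succ hm (by omega), Wk.corr_succ hm (by omega), ih,
      Wk.measureReal_T_parity, Wk.measureReal_T_parity]
    simp only [if_true, Bool.false_eq_true, if_false]
    ring

lemma corr_eq_lagCorr {m : ℕ} (hm : 1 ≤ m) (j : ℕ) :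
    Wk.corr m (m + j) true = lagCorr d Wk.p j := by
  cases j with
  | zero => simp [Wk.corr_self hm, lagCorr]
  | succ j =>
    rw [← add_assoc, Wk.corr_succ hm (by omega), Wk.corr_true_sub_false hm,
      Wk.measureReal_T_parity, if_pos rfl, lagCorr]
    ring

lemma integrable_inner_smul_D (m k : ℕ) :
    Integrable (fun ω => ⟪(Wk.L m ω : ℝ) • Wk.D m ω, (Wk.L k ω : ℝ) • Wk.D k ω⟫) μ := by
  simp only [Wk.inner_smul_D_eq]
  exact (Integrable.of_finite (f := stateInner)).comp_measurable (Wk.measurable_state_prod m k)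

lemma integral_inner_smul_D_eq_corr (m k : ℕ) :
    ∫ ω, ⟪(Wk.L m ω : ℝ) • Wk.D m ω, (Wk.L k ω : ℝ) • Wk.D k ω⟫ ∂μ
      = Wk.corr m k true := by
  have hF := Wk.measurable_state_prod m k
  simp only [Wk.inner_smul_D_eq]
  rw [← integral_map hF.aemeasurable (Measurable.of_discrete.aestronglyMeasurable),
    integral_fintype Integrable.of_finite, corr, ← Fintype.sum_prod_type']
  refine (Fintype.sum_of_injective (fun ux => ((ux.1, true), (ux.2, true))) ?_ _ _ ?_ ?_).symm
  · intro ux ux' h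
    simpa [Prod.ext_iff] using h
  · rintro ⟨⟨u, _ | _⟩, ⟨x, _ | _⟩⟩ h <;> simp [stateInner] at h ⊢
  · intro ux
    rw [map_measureReal_apply hF (measurableSet_singleton _), smul_eq_mul, mul_comm]
    simp [stateInner, Set.preimage, Set.inter_def]

lemma integral_inner_smul_D {m k : ℕ} (hm : 1 ≤ m) (hk : 1 ≤ k) :
    ∫ ω, ⟪(Wk.L m ω : ℝ) • Wk.D m ω, (Wk.L k ω : ℝ) • Wk.D k ω⟫ ∂μ
      = lagCorr d Wk.p (Nat.dist m k) := by
  wlog hmk : m ≤ k generalizing m k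
  · rw [Nat.dist_comm, ← this hk hm (by omega)]
    simp only [real_inner_comm ((Wk.L m _ : ℝ) • Wk.D m _)]
  obtain ⟨j, rfl⟩ := Nat.exists_eq_add_of_le hmk
  rw [integral_inner_smul_D_eq_corr, corr_eq_lagCorr _ hm, Nat.dist_eq_sub_of_le hmk,
    Nat.add_sub_cancel_left]

lemma integral_norm_W_sq (n : ℕ) :
    ∫ ω, ‖Wk.W n ω‖ ^ 2 ∂μ
      = ∑ m ∈ Finset.Icc 1 n, ∑ k ∈ Finset.Icc 1 n, lagCorr d Wk.p (Nat.dist m k) := by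
  simp only [Wk.norm_W_sq]
  rw [integral_finsetSum _ fun m _ =>
    integrable_finsetSum _ fun k _ => Wk.integrable_inner_smul_D m k]
  refine Finset.sum_congr rfl fun m hm => ?_
  rw [integral_finsetSum _ fun k _ => Wk.integrable_inner_smul_D m k]
  exact Finset.sum_congr rfl fun k hk =>
    Wk.integral_inner_smul_D (Finset.mem_Icc.mp hm).1 (Finset.mem_Icc.mp hk).1

end Correlations

end ReinforcedWalk

/-- With `p = P(T odd)` (and `p < 1` if `d = 1`), for every `n ≥ 1`,
`E(|W^r_n|²) = n d p/(d-p) + (p²(2d-1)/(2(d-p)²)) (((2p-1)/(2d-1))^n - 1)`. -/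
theorem reinforced_second_moment_formula
    {d : ℕ} (hd : 1 ≤ d) {Ω : Type} [MeasurableSpace Ω] {μ : Measure Ω}
    [IsProbabilityMeasure μ] (Wk : ReinforcedWalk d Ω μ)
    (hp : d = 1 → Wk.p < 1) :
    ∀ n : ℕ, 1 ≤ n →
      ∫ ω, ‖Wk.W n ω‖ ^ 2 ∂μ
        = (n : ℝ) * ((d : ℝ) * Wk.p / ((d : ℝ) - Wk.p))
          + (Wk.p ^ 2 * (2 * (d : ℝ) - 1) / (2 * ((d : ℝ) - Wk.p) ^ 2))
            * (((2 * Wk.p - 1) / (2 * (d : ℝ) - 1)) ^ n - 1) := by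
  intro n _
  have hp_le : Wk.p ≤ 1 := measureReal_le_one
  have hpd : Wk.p < d := by
    rcases hd.eq_or_lt with rfl | hd2
    · simpa using hp rfl
    · have : (2 : ℝ) ≤ d := by exact_mod_cast hd2
      linarith
  rw [Wk.integral_norm_W_sq]
  exact ReinforcedWalk.sum_lagCorr_dist (by exact_mod_cast hd) hpd n
end
end
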